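/- arXiv:quant-ph/0405096 — 4 statements merged into one kernel-verified Lean document; each statement's English description precedes it below -/
import Mathlib

section
/- E_W is monotone under unital separable trace-preserving maps: if Λ is a trace-preserving, unital, completely positive map that maps separable states to separable states and whose dual Λ† also maps separable states to separable states, then E_W(Λ(ρ)) ≤ E_W(ρ) for every density operator ρ. -/
open Matrix BigOperators
open scoped ComplexOrder

noncomputable section

/-- Index type of the tensor product Hilbert space `H₁ ⊗ ... ⊗ Hₙ`. -/
abbrev Idx (n : ℕ) (d : Fin n → ℕ) := ∀ i : Fin n, Fin (d i)

/-- Tensor (Kronecker) product of matrices on the factors. -/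
def prodMat {n : ℕ} {d : Fin n → ℕ}
    (ρ : ∀ i : Fin n, Matrix (Fin (d i)) (Fin (d i)) ℂ) :
    Matrix (Idx n d) (Idx n d) ℂ :=
  fun x y => ∏ i, ρ i (x i) (y i)

/-- A density operator: positive semidefinite with unit trace. -/
def IsDensity {m : Type*} [Fintype m] (ρ : Matrix m m ℂ) : Prop :=
  ρ.PosSemidef ∧ ρ.trace = 1

/-- The set of separable states: convex combinations of products of density operators. -/
def SepSet (n : ℕ) (d : Fin n → ℕ) : Set (Matrix (Idx n d) (Idx n d) ℂ) :=
  convexHull ℝ { σ | ∃ ρ : ∀ i : Fin n, Matrix (Fin (d i)) (Fin (d i)) ℂ,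
    (∀ i, IsDensity (ρ i)) ∧ σ = prodMat ρ }

/-- An entanglement witness: unit-trace Hermitian, nonnegative on all separable states. -/
def IsWitness {n : ℕ} {d : Fin n → ℕ} (W : Matrix (Idx n d) (Idx n d) ℂ) : Prop :=
  W.IsHermitian ∧ W.trace = 1 ∧ ∀ σ ∈ SepSet n d, 0 ≤ ((W * σ).trace).re

/-- The witnessed entanglement `E_W(ρ) = max {0, -inf_W Tr(Wρ)}`. -/
def Ew {n : ℕ} {d : Fin n → ℕ} (ρ : Matrix (Idx n d) (Idx n d) ℂ) : ℝ :=
  max 0 (sSup { x : ℝ | ∃ W, IsWitness W ∧ x = -(((W * ρ).trace).re) })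


/-- The Choi matrix of a linear map on operators. -/
def Choi {m : Type*} [Fintype m] [DecidableEq m]
    (Λ : Matrix m m ℂ →ₗ[ℂ] Matrix m m ℂ) : Matrix (m × m) (m × m) ℂ :=
  fun p q => (Λ (Matrix.single p.1 q.1 1)) p.2 q.2


section AuxGeneral
set_option linter.unusedSectionVars false
set_option maxHeartbeats 1000000
variable {m : Type*} [Fintype m] [DecidableEq m]

lemma psd_smul_real {P : Matrix m m ℂ} (hP : P.PosSemidef) {c : ℝ} (hc : 0 ≤ c) :
    ((c : ℂ) • P).PosSemidef := by
  refine Matrix.PosSemidef.of_dotProduct_mulVec_nonneg ?_ ?_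
  · have := hP.1
    rw [Matrix.IsHermitian, conjTranspose_smul, this.eq]
    simp
  · intro x
    rw [smul_mulVec, dotProduct_smul, smul_eq_mul]
    exact mul_nonneg (Complex.zero_le_real.mpr hc) (hP.dotProduct_mulVec_nonneg x)

lemma herm_trace_real {P : Matrix m m ℂ} (hP : P.IsHermitian) :
    P.trace = (P.trace.re : ℂ) := by
  have h := trace_conjTranspose P
  rw [hP.eq] at h
  exact ((Complex.conj_eq_iff_re).mp h.symm).symm

lemma psd_diag_nonneg {P : Matrix m m ℂ} (hP : P.PosSemidef) (a : m) : 0 ≤ P a a := by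
  have h := hP.dotProduct_mulVec_nonneg (Pi.single a 1)
  simpa [dotProduct, Pi.single_apply, apply_ite, Finset.sum_ite_eq', mulVec, mul_comm] using h

lemma psd_trace_re_nonneg {P : Matrix m m ℂ} (hP : P.PosSemidef) : 0 ≤ P.trace.re := by
  rw [Matrix.trace, Complex.re_sum]
  exact Finset.sum_nonneg fun a _ => (Complex.le_def.mp (psd_diag_nonneg hP a)).1

section PsdAux
open scoped MatrixOrder Matrix.Norms.L2Operator

lemma psd_exists_conjT_mul {P : Matrix m m ℂ} (hP : P.PosSemidef) :
    ∃ B : Matrix m m ℂ, P = Bᴴ * B := by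
  obtain ⟨B, hB⟩ := CStarAlgebra.nonneg_iff_eq_star_mul_self.mp hP.nonneg
  exact ⟨B, hB⟩

end PsdAux

lemma psd_eq_zero_of_trace {P : Matrix m m ℂ} (hP : P.PosSemidef) (h : P.trace = 0) :
    P = 0 := by
  obtain ⟨B, hB⟩ := psd_exists_conjT_mul hP
  have htr : P.trace = ((∑ a, ∑ j, Complex.normSq (B j a) : ℝ) : ℂ) := by
    rw [hB]
    simp [Matrix.trace, Matrix.diag, Matrix.mul_apply, Matrix.conjTranspose_apply,
      Complex.star_def, Complex.normSq_eq_conj_mul_self]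
  rw [htr] at h
  have h2 : (∑ a, ∑ j, Complex.normSq (B j a) : ℝ) = 0 := by exact_mod_cast h
  have hB0 : B = 0 := by
    ext j a
    have h3 := (Finset.sum_eq_zero_iff_of_nonneg (fun a _ =>
      Finset.sum_nonneg fun j _ => Complex.normSq_nonneg _)).mp h2 a (Finset.mem_univ a)
    have h4 := (Finset.sum_eq_zero_iff_of_nonneg (fun j _ =>
      Complex.normSq_nonneg _)).mp h3 j (Finset.mem_univ j)
    simpa using Complex.normSq_eq_zero.mp h4
  rw [hB, hB0]
  simp

lemma re_trace_conjT_mul {A B : Matrix m m ℂ} (hB : B.IsHermitian) :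
    ((Aᴴ * B).trace).re = ((A * B).trace).re := by
  have h : (Aᴴ * B).trace = star ((A * B).trace) := by
    calc (Aᴴ * B).trace = ((Bᴴ * A)ᴴ).trace := by
          rw [conjTranspose_mul, conjTranspose_conjTranspose]
      _ = star ((Bᴴ * A).trace) := trace_conjTranspose _
      _ = star ((B * A).trace) := by rw [hB.eq]
      _ = star ((A * B).trace) := by rw [trace_mul_comm]
  rw [h]
  exact Complex.conj_re _

lemma herm_trace_mul_real {A B : Matrix m m ℂ} (hA : A.IsHermitian) (hB : B.IsHermitian) :
    ((A * B).trace) = ((((A * B).trace).re : ℝ) : ℂ) := by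
  have h : star ((A * B).trace) = (A * B).trace := by
    calc star ((A * B).trace) = (((A * B))ᴴ).trace := (trace_conjTranspose _).symm
      _ = (Bᴴ * Aᴴ).trace := by rw [conjTranspose_mul]
      _ = (B * A).trace := by rw [hA.eq, hB.eq]
      _ = (A * B).trace := trace_mul_comm _ _
  exact ((Complex.conj_eq_iff_re).mp h).symm

def pureMat (u : m → ℂ) : Matrix m m ℂ := vecMulVec u (star u)

lemma pureMat_psd (u : m → ℂ) : (pureMat u).PosSemidef := by
  have h : pureMat u = replicateCol Unit u * (replicateCol Unit u)ᴴ := by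
    rw [conjTranspose_replicateCol, pureMat, vecMulVec_eq Unit]
  rw [h]
  exact posSemidef_self_mul_conjTranspose _

lemma pureMat_trace (u : m → ℂ) :
    (pureMat u).trace = ((∑ a, Complex.normSq (u a) : ℝ) : ℂ) := by
  simp [pureMat, Matrix.trace, Matrix.diag, vecMulVec_apply, Pi.star_apply,
    Complex.star_def, Complex.mul_conj]

lemma one_sub_pure_psd (u : m → ℂ) (h : ∑ a, Complex.normSq (u a) = 1) :
    ((1 : Matrix m m ℂ) - pureMat u).PosSemidef := by
  refine Matrix.PosSemidef.of_dotProduct_mulVec_nonneg ?_ ?_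
  · exact (Matrix.isHermitian_one).sub (pureMat_psd u).1
  · intro w
    set s : ℂ := ∑ b, (starRingEnd ℂ) (u b) * w b with hs
    have key : star w ⬝ᵥ ((1 - pureMat u) *ᵥ w)
        = ((∑ a, Complex.normSq (w a) - Complex.normSq s : ℝ) : ℂ) := by
      push_cast
      rw [sub_mulVec, dotProduct_sub, one_mulVec]
      congr 1
      · simp [dotProduct, Pi.star_apply, Complex.star_def,
          Complex.normSq_eq_conj_mul_self]
      · have h1 : star w ⬝ᵥ (pureMat u *ᵥ w) = (∑ a, (starRingEnd ℂ) (w a) * u a) * s := by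
          simp only [pureMat, mulVec, dotProduct, vecMulVec_apply, Pi.star_apply,
            Complex.star_def, hs, Finset.mul_sum, Finset.sum_mul]
          rw [Finset.sum_comm]
          congr 1; ext a; congr 1; ext b; ring
        have h2 : (∑ a, (starRingEnd ℂ) (w a) * u a) = (starRingEnd ℂ) s := by
          rw [hs, map_sum]
          congr 1; ext b
          rw [RingHom.map_mul, Complex.conj_conj]; ring
        rw [h1, h2, Complex.normSq_eq_conj_mul_self]
    rw [key]
    rw [Complex.zero_le_real]
    have hcs : Complex.normSq s ≤ ∑ a, Complex.normSq (w a) := by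
      have hU : ‖s‖ ≤ Real.sqrt (∑ a, Complex.normSq (u a)) *
          Real.sqrt (∑ a, Complex.normSq (w a)) := by
        let U : EuclideanSpace ℂ m := WithLp.toLp 2 u
        let V : EuclideanSpace ℂ m := WithLp.toLp 2 w
        have hinner : (inner ℂ U V : ℂ) = s := by
          simp [hs, PiLp.inner_apply, U, V, RCLike.inner_apply, Complex.star_def, mul_comm]
        have := norm_inner_le_norm (𝕜 := ℂ) U V
        rw [hinner] at this
        have hnU : ‖U‖ = Real.sqrt (∑ a, Complex.normSq (u a)) := by
          rw [EuclideanSpace.norm_eq]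
          congr 1
          apply Finset.sum_congr rfl
          intro a _
          rw [← Complex.sq_norm]
        have hnV : ‖V‖ = Real.sqrt (∑ a, Complex.normSq (w a)) := by
          rw [EuclideanSpace.norm_eq]
          congr 1
          apply Finset.sum_congr rfl
          intro a _
          rw [← Complex.sq_norm]
        rwa [hnU, hnV] at this
      have h1 : Complex.normSq s = ‖s‖ ^ 2 := by
        rw [Complex.normSq_eq_norm_sq]
      rw [h1]
      calc ‖s‖ ^ 2 ≤ (Real.sqrt (∑ a, Complex.normSq (u a)) *
            Real.sqrt (∑ a, Complex.normSq (w a))) ^ 2 := by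
            apply sq_le_sq' _ hU
            have := norm_nonneg s
            nlinarith [Real.sqrt_nonneg (∑ a, Complex.normSq (u a)),
              Real.sqrt_nonneg (∑ a, Complex.normSq (w a))]
        _ = (∑ a, Complex.normSq (u a)) * (∑ a, Complex.normSq (w a)) := by
            rw [mul_pow, Real.sq_sqrt, Real.sq_sqrt]
            · exact Finset.sum_nonneg fun a _ => Complex.normSq_nonneg _
            · exact Finset.sum_nonneg fun a _ => Complex.normSq_nonneg _
        _ = ∑ a, Complex.normSq (w a) := by rw [h, one_mul]
    linarith

lemma trace_mul_stdBasis (W : Matrix m m ℂ) (x y : m) :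
    (W * Matrix.single y x (1 : ℂ)).trace = W x y := by
  rw [Matrix.trace]
  have h : ∀ a, (W * Matrix.single y x (1:ℂ)).diag a = if a = x then W a y else 0 := by
    intro a
    by_cases hax : a = x
    · subst hax
      simp [Matrix.diag, Matrix.mul_single_apply_same]
    · simp [Matrix.diag, Matrix.mul_single_apply_of_ne, hax]
  simp only [h]
  simp

lemma density_entry_bound {ρ : Matrix m m ℂ} (hρ : IsDensity ρ) (x y : m) :
    ‖ρ x y‖ ≤ 1 := by
  obtain ⟨B, hB⟩ := psd_exists_conjT_mul hρ.1
  -- the column norms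
  set f : m → ℝ := fun a => ∑ j, Complex.normSq (B j a) with hf
  have hfnn : ∀ a, 0 ≤ f a := fun a => Finset.sum_nonneg fun j _ => Complex.normSq_nonneg _
  have hsum : ∑ a, f a = 1 := by
    have htr : ρ.trace = ((∑ a, f a : ℝ) : ℂ) := by
      rw [hB]
      simp [Matrix.trace, Matrix.diag, Matrix.mul_apply, Matrix.conjTranspose_apply,
        Complex.star_def, Complex.normSq_eq_conj_mul_self, hf]
    rw [hρ.2] at htr
    exact_mod_cast htr.symm
  have hfle : ∀ a, f a ≤ 1 := by
    intro a
    rw [← hsum]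
    exact Finset.single_le_sum (fun a _ => hfnn a) (Finset.mem_univ a)
  have hentry : ρ x y = ∑ j, (starRingEnd ℂ) (B j x) * B j y := by
    rw [hB]
    simp [Matrix.mul_apply, Matrix.conjTranspose_apply, Complex.star_def]
  rw [hentry]
  calc ‖∑ j, (starRingEnd ℂ) (B j x) * B j y‖
      ≤ ∑ j, ‖(starRingEnd ℂ) (B j x) * B j y‖ := norm_sum_le _ _
    _ ≤ ∑ j, (Complex.normSq (B j x) + Complex.normSq (B j y)) / 2 := by
        apply Finset.sum_le_sum
        intro j _
        rw [norm_mul, Complex.norm_conj]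
        have h1 : Complex.normSq (B j x) = (‖B j x‖) ^ 2 :=
          Complex.normSq_eq_norm_sq _
        have h2 : Complex.normSq (B j y) = (‖B j y‖) ^ 2 :=
          Complex.normSq_eq_norm_sq _
        rw [h1, h2]
        nlinarith [sq_nonneg (‖B j x‖ - ‖B j y‖),
          norm_nonneg (B j x), norm_nonneg (B j y)]
    _ = (f x + f y) / 2 := by rw [hf]; push_cast; rw [← Finset.sum_add_distrib]; simp [Finset.sum_div]
    _ ≤ 1 := by have := hfle x; have := hfle y; linarith

def NiceState (π : Matrix m m ℂ) : Prop :=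
  π.PosSemidef ∧ π.trace = 1 ∧ ((1 : Matrix m m ℂ) - π).PosSemidef

lemma nice_of_unit (u : m → ℂ) (h : ∑ a, Complex.normSq (u a) = 1) :
    NiceState (pureMat u) :=
  ⟨pureMat_psd u, by rw [pureMat_trace, h]; norm_num, one_sub_pure_psd u h⟩

lemma site_decomp (a b : m) : ∃ (c : Fin 4 → ℂ) (π : Fin 4 → Matrix m m ℂ),
    (∀ k, NiceState (π k)) ∧ (∑ k, ‖c k‖) ≤ 2 ∧
    Matrix.single a b (1 : ℂ) = ∑ k, c k • π k := by
  by_cases hab : a = b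
  · -- diagonal case
    subst hab
    refine ⟨fun k => if k = 0 then 1 else 0, fun _ => pureMat (Pi.single a 1), ?_, ?_, ?_⟩
    · intro k
      apply nice_of_unit
      simp [Pi.single_apply, apply_ite Complex.normSq]
    · simp [Fin.sum_univ_four]
    · have hp : pureMat (Pi.single a (1:ℂ)) = Matrix.single a a (1:ℂ) := by
        ext x y
        simp only [pureMat, vecMulVec_apply, Pi.star_apply, Pi.single_apply,
          Matrix.single, Matrix.of_apply]
        by_cases hx : x = a <;> by_cases hy : y = a <;>
          simp [hx, hy, show (a = y) ↔ (y = a) from eq_comm,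
            show (a = x) ↔ (x = a) from eq_comm]
      simp [Fin.sum_univ_four, hp]
  · -- off-diagonal case
    set r : ℂ := (((Real.sqrt 2)⁻¹ : ℝ) : ℂ) with hr
    have hrr : r * r = 1/2 := by
      rw [hr, ← Complex.ofReal_mul, ← mul_inv, Real.mul_self_sqrt (by norm_num : (0:ℝ) ≤ 2)]
      norm_num
    set u : Fin 4 → m → ℂ :=
      fun k x => if x = a then 1 else if x = b then Complex.I ^ (k:ℕ) else 0 with hu
    set v : Fin 4 → m → ℂ := fun k x => r * u k x with hv
    have hnormI : ∀ k : ℕ, Complex.normSq (Complex.I ^ k) = 1 := by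
      intro k
      rw [map_pow Complex.normSq, Complex.normSq_I, one_pow]
    have hnorm : ∀ k, ∑ x, Complex.normSq (v k x) = 1 := by
      intro k
      have h1 : ∀ x, Complex.normSq (v k x)
          = (1/2) * ((if x = a then 1 else 0) + (if x = b then 1 else 0)) := by
        intro x
        rw [hv]
        simp only [Complex.normSq_mul]
        have : Complex.normSq r = 1/2 := by
          rw [hr, Complex.normSq_ofReal, ← mul_inv, Real.mul_self_sqrt] <;> norm_num
        rw [this, hu]
        by_cases hx : x = a
        · subst hx; simp [hab]
        · by_cases hx' : x = b
          · subst hx'; simp [hx, hnormI]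
          · simp [hx, hx']
      simp only [h1]
      rw [← Finset.mul_sum, Finset.sum_add_distrib]
      simp [Finset.sum_ite_eq']
      norm_num
    refine ⟨fun k => Complex.I ^ (k:ℕ) / 2, fun k => pureMat (v k),
      fun k => nice_of_unit _ (hnorm k), ?_, ?_⟩
    · have : ∀ k : Fin 4, ‖Complex.I ^ (k:ℕ) / 2‖ = 1/2 := by
        intro k
        rw [norm_div, norm_pow, Complex.norm_I, one_pow]
        norm_num
      simp only [this]
      rw [Finset.sum_const]
      norm_num
    · ext x y
      simp only [Matrix.sum_apply, Matrix.smul_apply, smul_eq_mul, pureMat,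
        vecMulVec_apply, Pi.star_apply, Complex.star_def]
      have hvc : ∀ k x y, v k x * (starRingEnd ℂ) (v k y)
          = (1/2 : ℂ) * (u k x * (starRingEnd ℂ) (u k y)) := by
        intro k x y
        rw [hv]
        simp only []
        rw [RingHom.map_mul]
        rw [hr]
        rw [Complex.conj_ofReal]
        rw [← hr]
        calc r * u k x * (r * (starRingEnd ℂ) (u k y))
            = (r * r) * (u k x * (starRingEnd ℂ) (u k y)) := by ring
          _ = (1/2 : ℂ) * (u k x * (starRingEnd ℂ) (u k y)) := by rw [hrr]
      simp only [hvc]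
      have e0 : ((0 : Fin 4) : ℕ) = 0 := rfl
      have e1 : ((1 : Fin 4) : ℕ) = 1 := rfl
      have e2 : ((2 : Fin 4) : ℕ) = 2 := rfl
      have e3 : ((3 : Fin 4) : ℕ) = 3 := rfl
      have I3 : Complex.I ^ (3:ℕ) = -Complex.I := by
        rw [show (3:ℕ) = 2 + 1 from rfl, pow_succ, Complex.I_sq]; ring
      have sdb : Matrix.single a b (1:ℂ) x y = if x = a ∧ y = b then 1 else 0 := by
        simp only [Matrix.single, Matrix.of_apply]
        by_cases hx : x = a <;> by_cases hy : y = b <;>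
          simp [hx, hy, show (a = x) ↔ (x = a) from eq_comm,
            show (b = y) ↔ (y = b) from eq_comm]
      rw [sdb]
      simp only [hu]
      have hba : ¬ (b = a) := fun h => hab h.symm
      have I2 : Complex.I ^ (2:ℕ) = -1 := Complex.I_sq
      have I4 : Complex.I ^ (4:ℕ) = 1 := by
        rw [show (4:ℕ) = 2 + 2 from rfl, pow_add, I2]; ring
      have I5 : Complex.I ^ (5:ℕ) = Complex.I := by
        rw [show (5:ℕ) = 4 + 1 from rfl, pow_succ, I4]; ring
      by_cases hx : x = a
      · by_cases hy : y = b
        · subst hx; subst hy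
          simp [hba, hab, Fin.sum_univ_four, e0, e1, e2, e3, I2, I3, I4]
          ring_nf
          try simp [Complex.I_sq, I2, I3, I4, I5]
          try ring_nf
          try norm_num
        · by_cases hy' : y = a
          · subst hx; subst hy'
            simp [hba, hab, Fin.sum_univ_four, e0, e1, e2, e3, I2, I3, I4]
            ring_nf
            try simp [Complex.I_sq, I2, I3, I4, I5]
            try ring_nf
            try norm_num
          · simp [hx, hy, hy']
      · by_cases hx' : x = b
        · by_cases hy : y = b
          · subst hx'; subst hy
            simp [hba, hab, hx, Fin.sum_univ_four, e0, e1, e2, e3, I2, I3, I4]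
            ring_nf
            try simp [Complex.I_sq, I2, I3, I4, I5]
            try ring_nf
            try norm_num
          · by_cases hy' : y = a
            · subst hx'; subst hy'
              simp [hba, hab, hx, Fin.sum_univ_four, e0, e1, e2, e3, I2, I3, I4]
              ring_nf
              try simp [Complex.I_sq, I2, I3, I4, I5]
              try ring_nf
              try norm_num
            · simp [hx, hx', hy, hy']
        · simp [hx, hx']

end AuxGeneral

section AuxMulti
set_option linter.unusedSectionVars false
set_option maxHeartbeats 1000000
variable {n : ℕ} {d : Fin n → ℕ}

lemma prodMat_herm {ρ : ∀ i : Fin n, Matrix (Fin (d i)) (Fin (d i)) ℂ}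
    (h : ∀ i, (ρ i).IsHermitian) : (prodMat ρ).IsHermitian := by
  ext x y
  rw [conjTranspose_apply]
  show star (prodMat ρ y x) = prodMat ρ x y
  rw [prodMat, prodMat, star_prod]
  apply Finset.prod_congr rfl
  intro i _
  rw [← conjTranspose_apply, (h i).eq]

lemma sep_herm {σ : Matrix (Idx n d) (Idx n d) ℂ} (h : σ ∈ SepSet n d) :
    σ.IsHermitian := by
  have hsub : SepSet n d ⊆ {M : Matrix (Idx n d) (Idx n d) ℂ | M.IsHermitian} := by
    apply convexHull_min
    · rintro M ⟨ρ, hρ, rfl⟩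
      exact prodMat_herm fun i => (hρ i).1.1
    · intro A hA B hB p q hp hq hpq
      show (p • A + q • B).IsHermitian
      have : (p • A + q • B)ᴴ = p • Aᴴ + q • Bᴴ := by
        rw [conjTranspose_add, conjTranspose_smul, conjTranspose_smul, star_trivial,
          star_trivial]
      rw [Matrix.IsHermitian, this, hA.eq, hB.eq]
  exact hsub h

lemma prodMat_smul (c : ∀ _ : Fin n, ℂ) (ρ : ∀ i : Fin n, Matrix (Fin (d i)) (Fin (d i)) ℂ) :
    prodMat (fun i => c i • ρ i) = (∏ i, c i) • prodMat ρ := by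
  ext x y
  show ∏ i, (c i • ρ i) (x i) (y i) = (∏ i, c i) • prodMat ρ x y
  simp only [Matrix.smul_apply, smul_eq_mul, prodMat]
  rw [Finset.prod_mul_distrib]

lemma prodMat_one : prodMat (fun i => (1 : Matrix (Fin (d i)) (Fin (d i)) ℂ)) = 1 := by
  ext x y
  show ∏ i, (1 : Matrix (Fin (d i)) (Fin (d i)) ℂ) (x i) (y i) = (1 : Matrix (Idx n d) (Idx n d) ℂ) x y
  by_cases h : x = y
  · subst h
    simp [Matrix.one_apply_eq]
  · obtain ⟨i, hi⟩ := Function.ne_iff.mp h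
    rw [Matrix.one_apply_ne h]
    exact Finset.prod_eq_zero (Finset.mem_univ i) (Matrix.one_apply_ne hi)

lemma prodMat_mem_sep {ρ : ∀ i : Fin n, Matrix (Fin (d i)) (Fin (d i)) ℂ}
    (h : ∀ i, IsDensity (ρ i)) : prodMat ρ ∈ SepSet n d :=
  subset_convexHull ℝ _ ⟨ρ, h, rfl⟩

lemma prodMat_sum (M : ∀ i : Fin n, Fin 4 → Matrix (Fin (d i)) (Fin (d i)) ℂ) :
    prodMat (fun i => ∑ k, M i k) = ∑ K : ∀ _ : Fin n, Fin 4, prodMat (fun i => M i (K i)) := by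
  ext x y
  show ∏ i, (∑ k, M i k) (x i) (y i) = _
  simp only [Matrix.sum_apply]
  rw [Fintype.prod_sum (f := fun i k => M i k (x i) (y i))]
  rfl

lemma witness_psd_nonneg {W : Matrix (Idx n d) (Idx n d) ℂ} (hW : IsWitness W)
    {P : ∀ i : Fin n, Matrix (Fin (d i)) (Fin (d i)) ℂ} (hP : ∀ i, (P i).PosSemidef) :
    0 ≤ ((W * prodMat P).trace).re := by
  by_cases h0 : ∃ i, P i = 0
  · obtain ⟨i, hi⟩ := h0
    have : prodMat P = 0 := by
      ext x y
      exact Finset.prod_eq_zero (Finset.mem_univ i) (by rw [hi]; rfl)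
    rw [this, mul_zero, trace_zero]
    norm_num
  · push_neg at h0
    have htpos : ∀ i, 0 < ((P i).trace).re := by
      intro i
      rcases lt_or_eq_of_le (psd_trace_re_nonneg (hP i)) with h | h
      · exact h
      · exfalso
        apply h0 i
        apply psd_eq_zero_of_trace (hP i)
        rw [herm_trace_real (hP i).1, ← h]
        norm_num
    set ρ : ∀ i : Fin n, Matrix (Fin (d i)) (Fin (d i)) ℂ :=
      fun i => (((((P i).trace).re)⁻¹ : ℝ) : ℂ) • P i with hρ
    have hρd : ∀ i, IsDensity (ρ i) := by
      intro i
      constructor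
      · exact psd_smul_real (hP i) (inv_nonneg.mpr (le_of_lt (htpos i)))
      · rw [hρ]
        simp only [trace_smul, smul_eq_mul]
        rw [herm_trace_real (hP i).1, ← Complex.ofReal_mul, Complex.ofReal_re,
          inv_mul_cancel₀ (ne_of_gt (htpos i))]
        norm_num
    have hPcalc : prodMat P = ((∏ i, ((P i).trace).re : ℝ) : ℂ) • prodMat ρ := by
      have : P = fun i => ((((P i).trace).re : ℝ) : ℂ) • ρ i := by
        funext i
        rw [hρ, smul_smul, ← Complex.ofReal_mul,
          mul_inv_cancel₀ (ne_of_gt (htpos i))]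
        norm_num
      conv_lhs => rw [this]
      rw [prodMat_smul]
      norm_cast
    rw [hPcalc, Matrix.mul_smul, trace_smul]
    rw [smul_eq_mul, Complex.re_ofReal_mul]
    apply mul_nonneg
    · exact Finset.prod_nonneg fun i _ => le_of_lt (htpos i)
    · exact hW.2.2 _ (prodMat_mem_sep hρd)

lemma witness_pure_le_one {W : Matrix (Idx n d) (Idx n d) ℂ} (hW : IsWitness W)
    {π : ∀ i : Fin n, Matrix (Fin (d i)) (Fin (d i)) ℂ} (hπ : ∀ i, NiceState (π i)) :
    ((W * prodMat π).trace).re ≤ 1 := by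
  set A : ℕ → Matrix (Idx n d) (Idx n d) ℂ :=
    fun j => prodMat (fun i => if (i : ℕ) < j then π i else 1) with hA
  have h0 : A 0 = 1 := by
    show prodMat (fun i : Fin n => if (i : ℕ) < 0 then π i else 1) = 1
    have : (fun i : Fin n => if (i : ℕ) < 0 then π i else 1) =
        (fun i : Fin n => (1 : Matrix (Fin (d i)) (Fin (d i)) ℂ)) :=
      funext fun i => if_neg (Nat.not_lt_zero _)
    rw [this, prodMat_one]
  have hn : A n = prodMat π := by
    show prodMat (fun i : Fin n => if (i : ℕ) < n then π i else 1) = prodMat π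
    have : (fun i : Fin n => if (i : ℕ) < n then π i else 1) = π :=
      funext fun i => if_pos i.isLt
    rw [this]
  have hterm : ∀ j, j < n → 0 ≤ ((W * (A j - A (j + 1))).trace).re := by
    intro j hj
    set i₀ : Fin n := ⟨j, hj⟩ with hi₀
    have hdiff : A j - A (j + 1) = prodMat (fun i =>
        if (i : ℕ) < j then π i else if (i : ℕ) = j then 1 - π i else 1) := by
      ext x y
      show A j x y - A (j+1) x y = _
      set F : Fin n → ℂ := fun i => (if (i : ℕ) < j then π i else 1) (x i) (y i) with hF
      set G : Fin n → ℂ := fun i => (if (i : ℕ) < j + 1 then π i else 1) (x i) (y i) with hG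
      set H : Fin n → ℂ := fun i =>
        (if (i : ℕ) < j then π i else if (i : ℕ) = j then 1 - π i else 1) (x i) (y i) with hH
      have hFG : ∀ i, i ≠ i₀ → F i = G i := by
        intro i hi
        have hij : (i : ℕ) ≠ j := fun hc => hi (Fin.ext hc)
        simp only [hF, hG]
        by_cases hlt : (i : ℕ) < j
        · rw [if_pos hlt, if_pos (Nat.lt_succ_of_lt hlt)]
        · rw [if_neg hlt, if_neg (fun hc : (i : ℕ) < j + 1 =>
            hlt (lt_of_le_of_ne (Nat.lt_succ_iff.mp hc) hij))]
      have hHF : ∀ i, i ≠ i₀ → H i = F i := by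
        intro i hi
        have hij : (i : ℕ) ≠ j := fun hc => hi (Fin.ext hc)
        simp only [hH, hF]
        by_cases hlt : (i : ℕ) < j
        · rw [if_pos hlt, if_pos hlt]
        · rw [if_neg hlt, if_neg hlt, if_neg hij]
      have hFi₀ : F i₀ = (1 : Matrix (Fin (d i₀)) (Fin (d i₀)) ℂ) (x i₀) (y i₀) := by
        simp only [hF]; rw [if_neg (show ¬ ((i₀ : Fin n) : ℕ) < j from lt_irrefl j)]
      have hGi₀ : G i₀ = π i₀ (x i₀) (y i₀) := by
        simp only [hG]
        have : ((i₀ : Fin n) : ℕ) < j + 1 := Nat.lt_succ_self j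
        rw [if_pos this]
      have hHi₀ : H i₀ = F i₀ - G i₀ := by
        simp only [hH]
        rw [hFi₀, hGi₀]
        have h1 : ¬ ((i₀ : Fin n) : ℕ) < j := lt_irrefl j
        rw [if_neg h1]
        rw [if_pos (show ((i₀ : Fin n) : ℕ) = j from rfl), Matrix.sub_apply]
      show (∏ i, F i) - (∏ i, G i) = ∏ i, H i
      rw [← Finset.mul_prod_erase Finset.univ F (Finset.mem_univ i₀),
        ← Finset.mul_prod_erase Finset.univ G (Finset.mem_univ i₀),
        ← Finset.mul_prod_erase Finset.univ H (Finset.mem_univ i₀)]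
      have hEG : ∏ i ∈ Finset.univ.erase i₀, G i = ∏ i ∈ Finset.univ.erase i₀, F i :=
        Finset.prod_congr rfl fun i hi => (hFG i (Finset.mem_erase.mp hi).1).symm
      have hEH : ∏ i ∈ Finset.univ.erase i₀, H i = ∏ i ∈ Finset.univ.erase i₀, F i :=
        Finset.prod_congr rfl fun i hi => hHF i (Finset.mem_erase.mp hi).1
      rw [hEG, hEH, hHi₀]
      ring
    rw [hdiff]
    apply witness_psd_nonneg hW
    intro i
    by_cases h1 : (i : ℕ) < j
    · rw [if_pos h1]; exact (hπ i).1
    · by_cases h2 : (i : ℕ) = j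
      · rw [if_neg h1, if_pos h2]; exact (hπ i).2.2
      · rw [if_neg h1, if_neg h2]; exact Matrix.PosSemidef.one
  have hsum : (1 : Matrix (Idx n d) (Idx n d) ℂ) - prodMat π
      = ∑ j ∈ Finset.range n, (A j - A (j + 1)) := by
    rw [Finset.sum_range_sub' A n, h0, hn]
  have h2 : 0 ≤ ((W * ((1 : Matrix (Idx n d) (Idx n d) ℂ) - prodMat π)).trace).re := by
    rw [hsum, Matrix.mul_sum, trace_sum, Complex.re_sum]
    exact Finset.sum_nonneg fun j hj => hterm j (Finset.mem_range.mp hj)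
  have h3 : ((W * ((1 : Matrix (Idx n d) (Idx n d) ℂ) - prodMat π)).trace).re
      = 1 - ((W * prodMat π).trace).re := by
    rw [mul_sub, mul_one, trace_sub, Complex.sub_re, hW.2.1]
    norm_num
  rw [h3] at h2
  linarith

lemma witness_pure_abs_le_one {W : Matrix (Idx n d) (Idx n d) ℂ} (hW : IsWitness W)
    {π : ∀ i : Fin n, Matrix (Fin (d i)) (Fin (d i)) ℂ} (hπ : ∀ i, NiceState (π i)) :
    ‖(W * prodMat π).trace‖ ≤ 1 := by
  have hreal := herm_trace_mul_real hW.1 (prodMat_herm fun i => (hπ i).1.1)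
  rw [hreal, Complex.norm_real, Real.norm_eq_abs]
  rw [abs_le]
  constructor
  · have := hW.2.2 _ (prodMat_mem_sep fun i => ⟨(hπ i).1, (hπ i).2.1⟩)
    linarith
  · exact witness_pure_le_one hW hπ

lemma stdBasis_prod (x y : Idx n d) :
    prodMat (fun i => Matrix.single (y i) (x i) (1 : ℂ)) = Matrix.single y x (1 : ℂ) := by
  ext z w
  show ∏ i, Matrix.single (y i) (x i) (1 : ℂ) (z i) (w i) = _
  by_cases h : y = z ∧ x = w
  · obtain ⟨h1, h2⟩ := h
    subst h1; subst h2
    simp [Matrix.single_apply_same]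
  · rw [Matrix.single_apply_of_ne (h := h)]
    rcases not_and_or.mp h with h' | h'
    · obtain ⟨i, hi⟩ := Function.ne_iff.mp h'
      exact Finset.prod_eq_zero (Finset.mem_univ i)
        (Matrix.single_apply_of_ne _ _ _ _ _ fun hc => hi hc.1)
    · obtain ⟨i, hi⟩ := Function.ne_iff.mp h'
      exact Finset.prod_eq_zero (Finset.mem_univ i)
        (Matrix.single_apply_of_ne _ _ _ _ _ fun hc => hi hc.2)

lemma entry_bound {W : Matrix (Idx n d) (Idx n d) ℂ} (hW : IsWitness W) (x y : Idx n d) :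
    ‖W x y‖ ≤ 2 ^ n := by
  have hd := fun i : Fin n => site_decomp (m := Fin (d i)) (y i) (x i)
  choose c π hnice hsum hdec using hd
  have h1 : Matrix.single y x (1 : ℂ)
      = ∑ K : ∀ _ : Fin n, Fin 4, (∏ i, c i (K i)) • prodMat (fun i => π i (K i)) := by
    rw [← stdBasis_prod]
    have heq : (fun i => Matrix.single (y i) (x i) (1 : ℂ)) = fun i => ∑ k, c i k • π i k :=
      funext hdec
    rw [heq, prodMat_sum (fun i k => c i k • π i k)]
    exact Finset.sum_congr rfl fun K _ => prodMat_smul (fun i => c i (K i)) (fun i => π i (K i))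
  have h2 : W x y = ∑ K : ∀ _ : Fin n, Fin 4,
      (∏ i, c i (K i)) * ((W * prodMat (fun i => π i (K i))).trace) := by
    rw [← trace_mul_stdBasis W x y, h1, Matrix.mul_sum, trace_sum]
    exact Finset.sum_congr rfl fun K _ => by rw [Matrix.mul_smul, trace_smul, smul_eq_mul]
  rw [h2]
  calc ‖∑ K : ∀ _ : Fin n, Fin 4,
        (∏ i, c i (K i)) * ((W * prodMat (fun i => π i (K i))).trace)‖
      ≤ ∑ K : ∀ _ : Fin n, Fin 4, ‖(∏ i, c i (K i)) * ((W * prodMat (fun i => π i (K i))).trace)‖ :=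
        norm_sum_le _ _
    _ ≤ ∑ K : ∀ _ : Fin n, Fin 4, ∏ i, ‖c i (K i)‖ := by
        apply Finset.sum_le_sum
        intro K _
        rw [norm_mul, norm_prod]
        have habs := witness_pure_abs_le_one hW (fun i => hnice i (K i))
        have hnn : 0 ≤ ∏ i, ‖c i (K i)‖ :=
          Finset.prod_nonneg fun i _ => norm_nonneg _
        calc (∏ i, ‖c i (K i)‖) * ‖(W * prodMat fun i => π i (K i)).trace‖
            ≤ (∏ i, ‖c i (K i)‖) * 1 := by
              exact mul_le_mul_of_nonneg_left habs hnn
          _ = ∏ i, ‖c i (K i)‖ := mul_one _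
    _ = ∏ i, ∑ k, ‖c i k‖ :=
        (Fintype.prod_sum (f := fun i k => ‖c i k‖)).symm
    _ ≤ ∏ i : Fin n, (2 : ℝ) := by
        apply Finset.prod_le_prod
        · intro i _
          exact Finset.sum_nonneg fun k _ => norm_nonneg _
        · intro i _
          exact hsum i
    _ = 2 ^ n := by
        rw [Finset.prod_const, Finset.card_univ, Fintype.card_fin]

end AuxMulti

set_option maxHeartbeats 1000000
set_option linter.unusedVariables false

/-- `E_W` is monotone under unital, trace-preserving, completely positive
maps whose action and dual action preserve separability. -/
theorem witnessed_entanglement_monotone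
    {n : ℕ} {d : Fin n → ℕ}
    (Λ Λd : Matrix (Idx n d) (Idx n d) ℂ →ₗ[ℂ] Matrix (Idx n d) (Idx n d) ℂ)
    (hdual : ∀ X Y, ((Λd X) * Y).trace = (X * Λ Y).trace)
    (htp : ∀ X, (Λ X).trace = X.trace)
    (hunital : Λ 1 = 1)
    (hcp : (Choi Λ).PosSemidef)
    (hsep : ∀ σ ∈ SepSet n d, Λ σ ∈ SepSet n d)
    (hsepd : ∀ σ ∈ SepSet n d, Λd σ ∈ SepSet n d)
    (ρ : Matrix (Idx n d) (Idx n d) ℂ) (hρ : IsDensity ρ) :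
    Ew (Λ ρ) ≤ Ew ρ := by
  set S₁ := { x : ℝ | ∃ W, IsWitness W ∧ x = -(((W * (Λ ρ)).trace).re) } with hS₁
  set S₂ := { x : ℝ | ∃ W, IsWitness W ∧ x = -(((W * ρ).trace).re) } with hS₂
  -- inclusion
  have hsub : S₁ ⊆ S₂ := by
    rintro x ⟨W, hW, rfl⟩
    set M := Λd W with hM
    set W' : Matrix (Idx n d) (Idx n d) ℂ := (2⁻¹ : ℂ) • (M + Mᴴ) with hW'
    have hhalf : star (2⁻¹ : ℂ) = (2⁻¹ : ℂ) := by norm_num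
    have hkey : ∀ σ : Matrix (Idx n d) (Idx n d) ℂ, σ.IsHermitian →
        ((W' * σ).trace).re = ((W * Λ σ).trace).re := by
      intro σ hσ
      have h1 : W' * σ = (2⁻¹ : ℂ) • (M * σ + Mᴴ * σ) := by
        rw [hW', smul_mul_assoc, add_mul]
      rw [h1, trace_smul, smul_eq_mul, trace_add]
      rw [show ((2⁻¹ : ℂ)) = (((2⁻¹ : ℝ)) : ℂ) by norm_num, Complex.re_ofReal_mul]
      rw [Complex.add_re]
      rw [re_trace_conjT_mul hσ]
      have h2 : ((M * σ).trace).re = ((W * Λ σ).trace).re := by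
        rw [hM, hdual W σ]
      rw [h2]
      ring
    have htrM : M.trace = 1 := by
      have h1 : M.trace = (M * 1).trace := by rw [mul_one]
      rw [h1, hM, hdual W 1, hunital, mul_one, hW.2.1]
    have hWit : IsWitness W' := by
      refine ⟨?_, ?_, ?_⟩
      · rw [Matrix.IsHermitian, hW', conjTranspose_smul, hhalf, conjTranspose_add,
          conjTranspose_conjTranspose, add_comm]
      · rw [hW', trace_smul, trace_add, trace_conjTranspose, htrM]
        norm_num
      · intro σ hσ
        rw [hkey σ (sep_herm hσ)]
        exact hW.2.2 _ (hsep σ hσ)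
    exact ⟨W', hWit, by rw [hkey ρ hρ.1.1]⟩
  -- boundedness
  have hbdd : BddAbove S₂ := by
    refine ⟨(Fintype.card (Idx n d) : ℝ) * (Fintype.card (Idx n d) : ℝ) * 2 ^ n, ?_⟩
    rintro x ⟨W, hW, rfl⟩
    have h1 : -(((W * ρ).trace).re) ≤ ‖(W * ρ).trace‖ := by
      have ha := Complex.abs_re_le_norm ((W * ρ).trace)
      have hb := neg_le_abs (((W * ρ).trace).re)
      linarith
    calc -(((W * ρ).trace).re) ≤ ‖(W * ρ).trace‖ := h1
      _ ≤ ∑ z : Idx n d, ‖(W * ρ) z z‖ := by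
          rw [Matrix.trace]
          exact norm_sum_le _ _
      _ ≤ ∑ z : Idx n d, ∑ w : Idx n d, ‖W z w‖ * ‖ρ w z‖ := by
          apply Finset.sum_le_sum
          intro z _
          rw [show (W * ρ) z z = ∑ w, W z w * ρ w z from Matrix.mul_apply]
          calc ‖∑ w, W z w * ρ w z‖
              ≤ ∑ w, ‖W z w * ρ w z‖ := norm_sum_le _ _
            _ = ∑ w, ‖W z w‖ * ‖ρ w z‖ := by
                apply Finset.sum_congr rfl
                intro w _
                rw [norm_mul]
      _ ≤ ∑ _z : Idx n d, ∑ _w : Idx n d, (2 : ℝ) ^ n := by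
          apply Finset.sum_le_sum
          intro z _
          apply Finset.sum_le_sum
          intro w _
          calc ‖W z w‖ * ‖ρ w z‖
              ≤ (2 : ℝ) ^ n * 1 := by
                apply mul_le_mul (entry_bound hW z w) (density_entry_bound hρ w z)
                  (norm_nonneg _) (by positivity)
            _ = (2 : ℝ) ^ n := mul_one _
      _ = (Fintype.card (Idx n d) : ℝ) * (Fintype.card (Idx n d) : ℝ) * 2 ^ n := by
          simp [Finset.sum_const, Finset.card_univ]
          ring
  -- conclude
  rw [Ew, Ew, ← hS₁, ← hS₂]
  rcases Set.eq_empty_or_nonempty S₁ with h | h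
  · rw [h, Real.sSup_empty]
    exact max_le (le_max_left _ _) (le_max_left _ _)
  · exact max_le_max le_rfl (csSup_le_csSup hbdd h hsub)
end
end

section
/- For a bipartite NPPT density operator ρ_AB (one whose partial transpose ρ^{T_A} has a negative eigenvalue), the optimal decomposable entanglement witness is (up to normalization) P^{T_A}, where P is the orthogonal projector onto the eigenspace of the minimum eigenvalue of ρ^{T_A}; consequently inf over decomposable witnesses of Tr(Wρ) is proportional to λ_min(ρ^{T_A}). -/
open Matrix BigOperators
open scoped ComplexOrder

noncomputable section

/-- Index type of the bipartite Hilbert space `H_A ⊗ H_B`. -/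
abbrev BIdx (a b : ℕ) := Fin a × Fin b

/-- Partial transpose on the A factor: `(X^{T_A})_{(i,k),(j,l)} = X_{(j,k),(i,l)}`. -/
def ptA {a b : ℕ} (X : Matrix (BIdx a b) (BIdx a b) ℂ) : Matrix (BIdx a b) (BIdx a b) ℂ :=
  fun p q => X (q.1, p.2) (p.1, q.2)

/-- Kronecker product of a matrix on `H_A` and a matrix on `H_B`. -/
def kron {a b : ℕ} (A : Matrix (Fin a) (Fin a) ℂ) (B : Matrix (Fin b) (Fin b) ℂ) :
    Matrix (BIdx a b) (BIdx a b) ℂ :=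
  fun p q => A p.1 q.1 * B p.2 q.2

/-- The set of separable bipartite states. -/
def SepSet2 (a b : ℕ) : Set (Matrix (BIdx a b) (BIdx a b) ℂ) :=
  convexHull ℝ { σ | ∃ A B, IsDensity A ∧ IsDensity B ∧ σ = kron A B }

/-- An entanglement witness: unit-trace Hermitian, nonnegative on all separable states. -/
def IsWitness2 {a b : ℕ} (W : Matrix (BIdx a b) (BIdx a b) ℂ) : Prop :=
  W.IsHermitian ∧ W.trace = 1 ∧ ∀ σ ∈ SepSet2 a b, 0 ≤ ((W * σ).trace).re

/-- The witnessed entanglement `E_W(ρ) = max {0, -inf_W Tr(Wρ)}`. -/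
def Ew2 {a b : ℕ} (ρ : Matrix (BIdx a b) (BIdx a b) ℂ) : ℝ :=
  max 0 (sSup { x : ℝ | ∃ W, IsWitness2 W ∧ x = -(((W * ρ).trace).re) })

/-- A decomposable entanglement witness: `W = pP + (1-p)Q^{T_A}`, unit trace. -/
def IsDecompWitness {a b : ℕ} (W : Matrix (BIdx a b) (BIdx a b) ℂ) : Prop :=
  W.trace = 1 ∧ ∃ p : ℝ, 0 ≤ p ∧ p ≤ 1 ∧
    ∃ P Q : Matrix (BIdx a b) (BIdx a b) ℂ, P.PosSemidef ∧ Q.PosSemidef ∧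
      W = p • P + (1 - p) • ptA Q

/-- The decomposable witnessed entanglement. -/
def EdW {a b : ℕ} (ρ : Matrix (BIdx a b) (BIdx a b) ℂ) : ℝ :=
  max 0 (sSup { x : ℝ | ∃ W, IsDecompWitness W ∧ x = -(((W * ρ).trace).re) })

/-! For a decomposable witness `W = pP' + (1-p)Q^{T_A}` one has
`Tr(Wρ) = p Tr(P'ρ) + (1-p) Tr(Q ρ^{T_A}) ≥ (1-p) λ_min Tr Q`, and since `λ_min ≤ 0` the
unit-trace constraint `p Tr P' + (1-p) Tr Q = 1` turns this into `Tr(Wρ) ≥ λ_min`.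
The bound is attained by `P^{T_A} / Tr P`: as `P` maps into the minimal eigenspace,
`Tr(P^{T_A} ρ) = Tr(P ρ^{T_A}) = λ_min Tr P`. -/

namespace Matrix

variable {n 𝕜 : Type*} [Fintype n] [RCLike 𝕜]

open scoped MatrixOrder in
lemma PosSemidef.trace_mul_nonneg [DecidableEq n] {X Y : Matrix n n 𝕜} (hX : X.PosSemidef)
    (hY : Y.PosSemidef) : 0 ≤ (X * Y).trace := by
  have hsqrt : CFC.sqrt X * CFC.sqrt X = X := CFC.sqrt_mul_sqrt_self X hX.nonneg
  calc 0 ≤ ((CFC.sqrt X)ᴴ * Y * CFC.sqrt X).trace :=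
        (hY.conjTranspose_mul_mul_same _).trace_nonneg
    _ = (X * Y).trace := by
      rw [(CFC.sqrt_nonneg X).posSemidef.1, Matrix.mul_assoc, trace_mul_comm, Matrix.mul_assoc,
        hsqrt, trace_mul_comm]

open scoped MatrixOrder in
lemma IsHermitian.posSemidef_sub_smul_one [DecidableEq n] {A : Matrix n n 𝕜}
    (hA : A.IsHermitian) {r : ℝ} (h : ∀ i, r ≤ hA.eigenvalues i) :
    (A - (r : 𝕜) • 1).PosSemidef := by
  have hle : algebraMap ℝ (Matrix n n 𝕜) r ≤ A := algebraMap_le_of_le_spectrum (by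
    rw [hA.spectrum_real_eq_range_eigenvalues]
    rintro _ ⟨i, rfl⟩
    exact h i) hA.isSelfAdjoint
  simpa [Matrix.le_iff, Algebra.algebraMap_eq_smul_one] using hle

lemma PosSemidef.mul_re_trace_le_re_trace_mul [DecidableEq n] {Q A : Matrix n n 𝕜} (hQ : Q.PosSemidef)
    {r : ℝ} (hA : (A - (r : 𝕜) • 1).PosSemidef) :
    r * RCLike.re Q.trace ≤ RCLike.re (Q * A).trace := by
  have h := RCLike.re_le_re (hQ.trace_mul_nonneg hA)
  rw [Matrix.mul_sub, Matrix.mul_smul, Matrix.mul_one, trace_sub, trace_smul, map_sub,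
    smul_eq_mul, RCLike.re_ofReal_mul, map_zero] at h
  linarith

lemma PosSemidef.re_trace_pos {P : Matrix n n 𝕜} (hP : P.PosSemidef) (hne : P ≠ 0) : 0 < RCLike.re P.trace :=
  (RCLike.pos_iff.mp (hP.trace_nonneg.lt_of_ne (Ne.symm (hP.trace_eq_zero_iff.not.mpr hne)))).1

end Matrix

section DecomposableWitness

variable {a b : ℕ}

lemma trace_ptA (X : Matrix (BIdx a b) (BIdx a b) ℂ) : (ptA X).trace = X.trace := rfl

lemma trace_ptA_mul (X Y : Matrix (BIdx a b) (BIdx a b) ℂ) :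
    (ptA X * Y).trace = (X * ptA Y).trace := by
  simp only [Matrix.trace, Matrix.diag, Matrix.mul_apply, ← Fintype.sum_prod_type']
  exact Fintype.sum_bijective (fun pq => ((pq.2.1, pq.1.2), (pq.1.1, pq.2.2)))
    (Function.Involutive.bijective fun _ => rfl) _ _ fun _ => rfl

lemma isDecompWitness_inv_trace_smul_ptA {P : Matrix (BIdx a b) (BIdx a b) ℂ}
    (hP : P.PosSemidef) (hne : P ≠ 0) : IsDecompWitness ((P.trace.re)⁻¹ • ptA P) := by
  have htr : (P.trace.re : ℂ) = P.trace := (Complex.eq_re_of_ofReal_le hP.trace_nonneg).symm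
  have hpos : 0 < P.trace.re := hP.re_trace_pos hne
  refine ⟨?_, 0, le_rfl, zero_le_one, 0, (P.trace.re)⁻¹ • P, PosSemidef.zero,
    hP.smul (inv_nonneg.mpr hpos.le), ?_⟩
  · rw [trace_smul, trace_ptA, ← htr, Complex.real_smul, ← Complex.ofReal_mul, Complex.ofReal_re,
      inv_mul_cancel₀ hpos.ne', Complex.ofReal_one]
  · simp only [zero_smul, sub_zero, one_smul, zero_add]
    rfl

lemma re_trace_inv_trace_smul_ptA_mul {ρ P : Matrix (BIdx a b) (BIdx a b) ℂ} {c : ℝ}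
    (heig : ptA ρ * P = (c : ℂ) • P) (htr : P.trace.re ≠ 0) :
    (((P.trace.re)⁻¹ • ptA P * ρ).trace).re = c := by
  rw [smul_mul, trace_smul, trace_ptA_mul, trace_mul_comm, heig, trace_smul, smul_eq_mul,
    Complex.smul_re, Complex.re_ofReal_mul, smul_eq_mul, mul_comm c,
    inv_mul_cancel_left₀ htr]

lemma IsDecompWitness.le_re_trace_mul {W ρ : Matrix (BIdx a b) (BIdx a b) ℂ}
    (hW : IsDecompWitness W) (hρ : ρ.PosSemidef) {r : ℝ} (hr : r ≤ 0)
    (hρr : (ptA ρ - (r : ℂ) • 1).PosSemidef) : r ≤ ((W * ρ).trace).re := by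
  obtain ⟨htrW, p, hp0, hp1, P, Q, hP, hQ, rfl⟩ := hW
  have hPρ : 0 ≤ ((P * ρ).trace).re := RCLike.re_le_re (hP.trace_mul_nonneg hρ)
  have hQρ : r * Q.trace.re ≤ ((ptA Q * ρ).trace).re := by
    rw [trace_ptA_mul]
    exact hQ.mul_re_trace_le_re_trace_mul hρr
  have hPtr : 0 ≤ P.trace.re := RCLike.re_le_re hP.trace_nonneg
  have hweights : p * P.trace.re + (1 - p) * Q.trace.re = 1 := by
    simpa [trace_add, trace_smul, trace_ptA] using congrArg Complex.re htrW
  have hsplit : (((p • P + (1 - p) • ptA Q) * ρ).trace).re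
      = p * ((P * ρ).trace).re + (1 - p) * ((ptA Q * ρ).trace).re := by
    simp [add_mul, trace_add, trace_smul]
  rw [hsplit]
  nlinarith [mul_nonneg hp0 hPρ, mul_nonneg hp0 hPtr,
    mul_le_mul_of_nonneg_left hQρ (sub_nonneg.mpr hp1)]

end DecomposableWitness

theorem optimal_decomposable_witness_general
    {a b : ℕ} (ρ : Matrix (BIdx a b) (BIdx a b) ℂ) (hρ : IsDensity ρ)
    (hH : (ptA ρ).IsHermitian)
    (hNPPT : ∃ i, hH.eigenvalues i < 0)
    (lam : ℝ) (hlam : lam = ⨅ i, hH.eigenvalues i)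
    (P : Matrix (BIdx a b) (BIdx a b) ℂ)
    (hPsd : P.PosSemidef) (hPne : P ≠ 0)
    (heig : (ptA ρ) * P = (lam : ℂ) • P) :
    IsDecompWitness ((P.trace.re)⁻¹ • ptA P) ∧
    (((((P.trace.re)⁻¹ • ptA P) * ρ).trace).re = lam) ∧
    sInf { x : ℝ | ∃ W, IsDecompWitness W ∧ x = ((W * ρ).trace).re } = lam := by
  have hlam_le : ∀ i, lam ≤ hH.eigenvalues i :=
    hlam ▸ fun i => ciInf_le (Set.finite_range _).bddBelow i
  have hlam_nonpos : lam ≤ 0 := by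
    obtain ⟨i, hi⟩ := hNPPT
    exact (hlam_le i).trans hi.le
  have hW := isDecompWitness_inv_trace_smul_ptA hPsd hPne
  have hval := re_trace_inv_trace_smul_ptA_mul heig (hPsd.re_trace_pos hPne).ne'
  refine ⟨hW, hval, IsLeast.csInf_eq ⟨⟨_, hW, hval.symm⟩, ?_⟩⟩
  rintro _ ⟨W, hW', rfl⟩
  exact hW'.le_re_trace_mul hρ.1 hlam_nonpos (hH.posSemidef_sub_smul_one hlam_le)

/-- for an NPPT state, the normalized partial transpose of the projector
onto the minimal eigenspace of `ρ^{T_A}` is the optimal decomposable witness, and the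
infimum of `Tr(Wρ)` over decomposable witnesses equals `λ_min(ρ^{T_A})`. -/
theorem optimal_decomposable_witness
    {a b : ℕ} (ρ : Matrix (BIdx a b) (BIdx a b) ℂ) (hρ : IsDensity ρ)
    (hH : (ptA ρ).IsHermitian)
    (hNPPT : ∃ i, hH.eigenvalues i < 0)
    (lam : ℝ) (hlam : lam = ⨅ i, hH.eigenvalues i)
    (P : Matrix (BIdx a b) (BIdx a b) ℂ)
    (hPsd : P.PosSemidef) (hproj : P * P = P) (hPne : P ≠ 0)
    (heig : (ptA ρ) * P = (lam : ℂ) • P)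
    (hfull : ∀ v : BIdx a b → ℂ, (ptA ρ).mulVec v = (lam : ℂ) • v → P.mulVec v = v) :
    IsDecompWitness ((P.trace.re)⁻¹ • ptA P) ∧
    (((((P.trace.re)⁻¹ • ptA P) * ρ).trace).re = lam) ∧
    sInf { x : ℝ | ∃ W, IsDecompWitness W ∧ x = ((W * ρ).trace).re } = lam :=
  optimal_decomposable_witness_general ρ hρ hH hNPPT lam hlam P hPsd hPne heig
end
end

section
/- For a pure bipartite state |Ψ⟩ with Schmidt coefficients a₁ ≥ a₂ ≥ ... (so |Ψ⟩ = Σᵢ aᵢ |i⟩|i⟩ with aᵢ ≥ 0, Σ aᵢ² = 1), the witnessed entanglement satisfies E_W(|Ψ⟩⟨Ψ|) = a₁ a₂. -/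
open Matrix BigOperators
open scoped ComplexOrder

noncomputable section

namespace WEaux


/-- outer product matrix -/
def outer {n : Type*} (v : n → ℂ) : Matrix n n ℂ := fun i j => v i * (starRingEnd ℂ) (v j)

lemma outer_isHermitian {n : Type*} (v : n → ℂ) : (outer v).IsHermitian := by
  ext i j
  simp [outer, conjTranspose, Matrix.IsHermitian, mul_comm]

lemma outer_posSemidef {n : Type*} [Fintype n] (v : n → ℂ) : (outer v).PosSemidef := by
  refine Matrix.posSemidef_iff_dotProduct_mulVec.mpr ⟨outer_isHermitian v, fun x => ?_⟩
  have : star x ⬝ᵥ (outer v) *ᵥ x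
      = star (∑ j, (starRingEnd ℂ) (v j) * x j) * (∑ j, (starRingEnd ℂ) (v j) * x j) := by
    simp only [dotProduct, mulVec, outer, Finset.mul_sum, Finset.sum_mul, star_sum, star_mul',
      Pi.star_apply]
    rw [Finset.sum_comm]
    refine Finset.sum_congr rfl fun i _ => Finset.sum_congr rfl fun j _ => ?_
    simp [RCLike.star_def]
    ring
  rw [this]
  exact star_mul_self_nonneg _

lemma outer_trace {n : Type*} [Fintype n] (v : n → ℂ) :
    (outer v).trace = ∑ i, v i * (starRingEnd ℂ) (v i) := rfl

lemma trace_outer_mul {n : Type*} [Fintype n] (v : n → ℂ) (S : Matrix n n ℂ) :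
    ((outer v) * S).trace = star v ⬝ᵥ S *ᵥ v := by
  simp only [Matrix.trace, Matrix.diag, Matrix.mul_apply, outer, dotProduct, mulVec,
    Pi.star_apply, RCLike.star_def]
  rw [Finset.sum_comm]
  refine Finset.sum_congr rfl fun i _ => ?_
  simp only [Finset.mul_sum]
  refine Finset.sum_congr rfl fun j _ => by ring

lemma trace_outer_mul_nonneg {n : Type*} [Fintype n] (v : n → ℂ) {S : Matrix n n ℂ}
    (hS : S.PosSemidef) : 0 ≤ (((outer v) * S).trace).re := by
  rw [trace_outer_mul]
  have := hS.dotProduct_mulVec_nonneg v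
  rw [Complex.nonneg_iff] at this
  exact this.1



lemma kron_conjT_mul {a b : ℕ} (A C : Matrix (Fin a) (Fin a) ℂ) (B D : Matrix (Fin b) (Fin b) ℂ) :
    kron (Aᴴ * C) (Bᴴ * D) = (kron A B)ᴴ * (kron C D) := by
  ext p q
  simp only [kron, Matrix.mul_apply, conjTranspose_apply, Matrix.conjTranspose]
  rw [Fintype.sum_prod_type]
  rw [Finset.sum_mul_sum]
  refine Finset.sum_congr rfl fun i _ => Finset.sum_congr rfl fun j _ => ?_
  simp [kron, Matrix.of_apply]
  ring

lemma kron_posSemidef {a b : ℕ} {A : Matrix (Fin a) (Fin a) ℂ} {B : Matrix (Fin b) (Fin b) ℂ}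
    (hA : A.PosSemidef) (hB : B.PosSemidef) : (kron A B).PosSemidef := by
  exact Matrix.PosSemidef.kronecker hA hB

lemma kron_trace {a b : ℕ} (A : Matrix (Fin a) (Fin a) ℂ) (B : Matrix (Fin b) (Fin b) ℂ) :
    (kron A B).trace = A.trace * B.trace := by
  simp only [Matrix.trace, Matrix.diag, kron]
  rw [Fintype.sum_prod_type, Finset.sum_mul_sum]

lemma kron_smul_left {a b : ℕ} (r : ℝ) (A : Matrix (Fin a) (Fin a) ℂ)
    (B : Matrix (Fin b) (Fin b) ℂ) : kron (r • A) B = r • kron A B := by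
  ext p q
  simp [kron, Matrix.smul_apply, Complex.real_smul]
  ring

lemma ptA_kron {a b : ℕ} (A : Matrix (Fin a) (Fin a) ℂ) (B : Matrix (Fin b) (Fin b) ℂ) :
    ptA (kron A B) = kron Aᵀ B := by
  ext p q; rfl

lemma ptA_trace {a b : ℕ} (X : Matrix (BIdx a b) (BIdx a b) ℂ) :
    (ptA X).trace = X.trace := rfl

lemma ptA_isHermitian {a b : ℕ} {X : Matrix (BIdx a b) (BIdx a b) ℂ}
    (hX : X.IsHermitian) : (ptA X).IsHermitian := by
  ext p q
  have := congrFun (congrFun hX (p.1, q.2)) (q.1, p.2)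
  simpa [ptA, conjTranspose_apply] using congrArg (starRingEnd ℂ) this.symm

lemma trace_ptA_mul {a b : ℕ} (X Y : Matrix (BIdx a b) (BIdx a b) ℂ) :
    ((ptA X) * Y).trace = (X * (ptA Y)).trace := by
  have h1 : ((ptA X) * Y).trace
      = ∑ x : BIdx a b × BIdx a b, X (x.2.1, x.1.2) (x.1.1, x.2.2) * Y x.2 x.1 := by
    rw [Matrix.trace]
    simp only [Matrix.diag, Matrix.mul_apply, ptA]
    conv_rhs => rw [Fintype.sum_prod_type]
  have h2 : (X * (ptA Y)).trace
      = ∑ x : BIdx a b × BIdx a b, X x.1 x.2 * Y (x.1.1, x.2.2) (x.2.1, x.1.2) := by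
    rw [Matrix.trace]
    simp only [Matrix.diag, Matrix.mul_apply, ptA]
    conv_rhs => rw [Fintype.sum_prod_type]
  rw [h1, h2]
  exact Fintype.sum_equiv
    ⟨fun x => ((x.2.1, x.1.2), (x.1.1, x.2.2)), fun x => ((x.2.1, x.1.2), (x.1.1, x.2.2)),
      fun x => rfl, fun x => rfl⟩ _ _ (fun x => rfl)



def ω : ℂ := Complex.exp (2 * Real.pi * Complex.I / 3)

lemma omega_prim : IsPrimitiveRoot ω 3 := Complex.isPrimitiveRoot_exp 3 (by norm_num)

lemma omega_pow_three : ω ^ 3 = 1 := omega_prim.pow_eq_one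

lemma omega_conj : (starRingEnd ℂ) ω = ω ^ 2 := by
  have h1 : (starRingEnd ℂ) ω = ω⁻¹ := by
    rw [ω, ← Complex.exp_conj, ← Complex.exp_neg]
    congr 1
    have : (2 * (Real.pi : ℂ) * Complex.I / 3) = ((2 * Real.pi / 3 : ℝ) : ℂ) * Complex.I := by
      push_cast; ring
    rw [this, _root_.map_mul, Complex.conj_ofReal, Complex.conj_I]
    ring
  rw [h1]
  refine inv_eq_of_mul_eq_one_right ?_
  rw [← pow_succ']
  exact omega_pow_three

lemma sum3 (c : ℕ) : ∑ t : Fin 3, ω ^ (c * (t : ℕ)) = if 3 ∣ c then 3 else 0 := by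
  rw [Fin.sum_univ_three]
  have e0 : ((0 : Fin 3) : ℕ) = 0 := rfl
  have e1 : ((1 : Fin 3) : ℕ) = 1 := rfl
  have e2 : ((2 : Fin 3) : ℕ) = 2 := rfl
  rw [e0, e1, e2, mul_zero, pow_zero, mul_one]
  split
  · next h =>
    have h1 : ω ^ c = 1 := (omega_prim.pow_eq_one_iff_dvd c).mpr h
    rw [pow_mul, h1]
    norm_num
  · next h =>
    have hx1 : ω ^ c ≠ 1 := fun hc => h ((omega_prim.pow_eq_one_iff_dvd c).mp hc)
    have hx3 : (ω ^ c) ^ 3 = 1 := by rw [← pow_mul, mul_comm, pow_mul, omega_pow_three, one_pow]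
    have hfac : (ω ^ c - 1) * ((ω ^ c) ^ 2 + ω ^ c + 1) = (ω ^ c) ^ 3 - 1 := by ring
    rw [hx3, sub_self] at hfac
    have h2 : (ω ^ c) ^ 2 + ω ^ c + 1 = 0 := by
      rcases mul_eq_zero.mp hfac with h' | h'
      · exact absurd (sub_eq_zero.mp h') hx1
      · exact h'
    rw [pow_mul]
    linear_combination h2

/-- phase exponent coefficients -/
def cf {m : ℕ} (i j k l : Fin m) : Fin m → ℕ := fun r =>
  (if r = i then 1 else 0) + 2 * (if r = j then 1 else 0)
    + 2 * (if r = k then 1 else 0) + 4 * (if r = l then 1 else 0)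

lemma class_iff {m : ℕ} (i j k l : Fin m) :
    (∀ r, 3 ∣ cf i j k l r) ↔ ((i = j ∧ k = l) ∨ (i = k ∧ j = l)) := by
  constructor
  · intro h
    by_cases hij : i = j
    · subst hij
      by_cases hkl : k = l
      · exact Or.inl ⟨rfl, hkl⟩
      · exfalso
        have hl := h l
        unfold cf at hl
        split_ifs at hl <;> simp_all <;> omega
    · have hik : i = k := by
        have hi := h i
        unfold cf at hi
        split_ifs at hi <;> (try simp_all) <;> omega
      have hjl : j = l := by
        have hj := h j
        unfold cf at hj
        split_ifs at hj <;> (try simp_all) <;> omega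
      exact Or.inr ⟨hik, hjl⟩
  · rintro (⟨rfl, rfl⟩ | ⟨rfl, rfl⟩) r <;> unfold cf <;> split_ifs <;> omega

lemma phase_sum {m : ℕ} (i j k l : Fin m) :
    ∑ n : Fin m → Fin 3, ∏ r, ω ^ (cf i j k l r * (n r : ℕ))
      = if ((i = j ∧ k = l) ∨ (i = k ∧ j = l)) then (3 : ℂ) ^ m else 0 := by
  classical
  have h1 : ∑ n : Fin m → Fin 3, ∏ r, ω ^ (cf i j k l r * (n r : ℕ))
      = ∏ r, ∑ t : Fin 3, ω ^ (cf i j k l r * (t : ℕ)) := by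
    rw [Finset.prod_univ_sum]
    rw [Fintype.piFinset_univ]
  rw [h1]
  have h2 : ∀ r, (∑ t : Fin 3, ω ^ (cf i j k l r * (t : ℕ)))
      = if 3 ∣ cf i j k l r then 3 else 0 := fun r => sum3 _
  simp_rw [h2]
  by_cases hall : ∀ r, 3 ∣ cf i j k l r
  · rw [if_pos ((class_iff i j k l).mp hall)]
    rw [Finset.prod_congr rfl (fun r _ => if_pos (hall r)), Finset.prod_const]
    simp
  · rw [if_neg (fun hc => hall ((class_iff i j k l).mpr hc))]
    push_neg at hall
    obtain ⟨r, hr⟩ := hall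
    exact Finset.prod_eq_zero (Finset.mem_univ r) (if_neg hr)


open Complex

variable {m : ℕ}

/-- basis vector -/
def ev (i : Fin m) : Fin m → ℂ := fun r => if r = i then 1 else 0

/-- component vectors of product states -/
def xv (a : Fin m → ℝ) (n : Fin m → Fin 3) : Fin m → ℂ :=
  fun i => (Real.sqrt (a i) : ℝ) * ω ^ (n i : ℕ)

def yv (a : Fin m → ℝ) (n : Fin m → Fin 3) : Fin m → ℂ :=
  fun i => (Real.sqrt (a i) : ℝ) * ω ^ (2 * (n i : ℕ))

def φv (a : Fin m → ℝ) (n : Fin m → Fin 3) : BIdx m m → ℂ :=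
  fun p => xv a n p.1 * yv a n p.2

def cc (a : Fin m → ℝ) (t : ℝ) (i j : Fin m) : ℝ := if i = j then t else t - a i * a j

lemma kron_outer (u v : Fin m → ℂ) :
    kron (outer u) (outer v) = outer (fun p : BIdx m m => u p.1 * v p.2) := by
  ext p q
  simp only [kron, outer, _root_.map_mul]
  ring

lemma omega_pow_mul_conj (e f : ℕ) :
    ω ^ e * (starRingEnd ℂ) (ω ^ f) = ω ^ (e + 2 * f) := by
  rw [map_pow, omega_conj, ← pow_mul, ← pow_add]

lemma outer_φv_apply (a : Fin m → ℝ) (n : Fin m → Fin 3) (p q : BIdx m m) :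
    outer (φv a n) p q
      = ((Real.sqrt (a p.1) * Real.sqrt (a p.2) * (Real.sqrt (a q.1) * Real.sqrt (a q.2)) : ℝ) : ℂ)
        * ∏ r, ω ^ (cf p.1 p.2 q.1 q.2 r * (n r : ℕ)) := by
  have hsum : ∀ r, cf p.1 p.2 q.1 q.2 r * (n r : ℕ)
      = (if r = p.1 then (n r : ℕ) else 0) + 2 * (if r = p.2 then (n r : ℕ) else 0)
        + 2 * (if r = q.1 then (n r : ℕ) else 0) + 4 * (if r = q.2 then (n r : ℕ) else 0) := by
    intro r; unfold cf; split_ifs <;> ring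
  rw [Finset.prod_pow_eq_pow_sum]
  simp_rw [hsum, Finset.sum_add_distrib, ← Finset.mul_sum, Finset.sum_ite_eq' Finset.univ,
    Finset.mem_univ, if_pos]
  have step1 : outer (φv a n) p q
      = ((Real.sqrt (a p.1) : ℂ) * (Real.sqrt (a p.2) : ℂ)
          * ((Real.sqrt (a q.1) : ℂ) * (Real.sqrt (a q.2) : ℂ)))
        * ((ω ^ ((n p.1 : ℕ) + 2 * (n p.2 : ℕ)))
            * (starRingEnd ℂ) (ω ^ ((n q.1 : ℕ) + 2 * (n q.2 : ℕ)))) := by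
    simp only [outer, φv, xv, yv, _root_.map_mul, Complex.conj_ofReal, pow_add]
    ring
  rw [step1, omega_pow_mul_conj]
  have hexp : (n p.1 : ℕ) + 2 * (n p.2 : ℕ) + 2 * ((n q.1 : ℕ) + 2 * (n q.2 : ℕ))
      = (n p.1 : ℕ) + 2 * (n p.2 : ℕ) + 2 * (n q.1 : ℕ) + 4 * (n q.2 : ℕ) := by ring
  rw [hexp]
  push_cast
  ring

lemma sum_outer_φv (a : Fin m → ℝ) (p q : BIdx m m) :
    ∑ n : Fin m → Fin 3, outer (φv a n) p q
      = if ((p.1 = p.2 ∧ q.1 = q.2) ∨ (p.1 = q.1 ∧ p.2 = q.2)) then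
          (3:ℂ)^m * ((Real.sqrt (a p.1) * Real.sqrt (a p.2)
            * (Real.sqrt (a q.1) * Real.sqrt (a q.2)) : ℝ) : ℂ)
        else 0 := by
  simp_rw [outer_φv_apply]
  rw [← Finset.mul_sum, phase_sum]
  split_ifs <;> ring

lemma sum_cc_apply (a : Fin m → ℝ) (t : ℝ) (i j k l : Fin m) :
    (∑ u : BIdx m m, cc a t u.1 u.2 • kron (outer (ev u.1)) (outer (ev u.2))) (i,j) (k,l)
      = (if i = k ∧ j = l then ((cc a t i j : ℝ) : ℂ) else 0) := by
  rw [Matrix.sum_apply]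
  rw [Finset.sum_eq_single (i, j)]
  · have hk : kron (outer (ev i)) (outer (ev j)) (i,j) (k,l)
        = (if k = i then 1 else 0) * (if l = j then 1 else 0) := by
      simp only [kron, outer, ev, if_pos rfl, one_mul]
      split_ifs <;> simp
    rw [Matrix.smul_apply, hk]
    by_cases h1 : k = i <;> by_cases h2 : l = j
    · subst h1; subst h2
      rw [if_pos rfl, if_pos rfl, if_pos ⟨rfl, rfl⟩]
      simp [Complex.real_smul]
    · rw [if_pos h1, if_neg h2, if_neg (fun hc => h2 hc.2.symm)]
      simp
    · have hn : ¬(i = k ∧ j = l) := fun hc => h1 hc.1.symm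
      rw [if_neg h1, if_neg hn]
      simp
    · have hn : ¬(i = k ∧ j = l) := fun hc => h1 hc.1.symm
      rw [if_neg h1, if_neg hn]
      simp
  · intro b _ hb
    obtain ⟨u, v⟩ := b
    have h : ¬ (i = u) ∨ ¬ (j = v) := by
      by_contra hc
      push_neg at hc
      exact hb (by simp [← hc.1, ← hc.2])
    simp only [Matrix.smul_apply, kron, outer, ev]
    rcases h with h | h <;> simp [h]
  · intro h
    exact absurd (Finset.mem_univ _) h

lemma decomp (a : Fin m → ℝ) (hpos : ∀ i, 0 ≤ a i) (t : ℝ) :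
    (Matrix.of fun p q : BIdx m m => (if p.1 = p.2 then (a p.1 : ℂ) else 0)
        * (starRingEnd ℂ) (if q.1 = q.2 then (a q.1 : ℂ) else 0))
      + t • (1 : Matrix (BIdx m m) (BIdx m m) ℂ)
    = ((3:ℝ)^m)⁻¹ • (∑ n : Fin m → Fin 3, outer (φv a n))
      + ∑ u : BIdx m m, cc a t u.1 u.2 • kron (outer (ev u.1)) (outer (ev u.2)) := by
  have hsq : ∀ x : Fin m, Real.sqrt (a x) * Real.sqrt (a x) = a x :=
    fun x => Real.mul_self_sqrt (hpos x)
  have h3c : ((3:ℂ))^m ≠ 0 := by positivity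
  funext p q
  obtain ⟨i, j⟩ := p
  obtain ⟨k, l⟩ := q
  show (if i = j then (a i : ℂ) else 0) * (starRingEnd ℂ) (if k = l then (a k : ℂ) else 0)
      + (t • (1 : Matrix (BIdx m m) (BIdx m m) ℂ)) (i,j) (k,l)
    = (((3:ℝ)^m)⁻¹ • (∑ n : Fin m → Fin 3, outer (φv a n))) (i,j) (k,l)
      + (∑ u : BIdx m m, cc a t u.1 u.2 • kron (outer (ev u.1)) (outer (ev u.2))) (i,j) (k,l)
  have hφ := sum_outer_φv a ((i,j)) ((k,l))
  dsimp only at hφ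
  have hone : (t • (1 : Matrix (BIdx m m) (BIdx m m) ℂ)) (i,j) (k,l)
      = if i = k ∧ j = l then (t : ℂ) else 0 := by
    simp only [Matrix.smul_apply, Matrix.one_apply, Prod.mk.injEq]
    split_ifs <;> simp [Complex.real_smul]
  have hconj : (starRingEnd ℂ) (if k = l then (a k : ℂ) else 0)
      = if k = l then (a k : ℂ) else 0 := by
    split_ifs <;> simp [Complex.conj_ofReal]
  rw [sum_cc_apply, hone, hconj, Matrix.smul_apply, Matrix.sum_apply, hφ]
  by_cases hd : i = k ∧ j = l
  · obtain ⟨rfl, rfl⟩ := hd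
    by_cases hij : i = j
    · subst hij
      simp only [and_self, or_self, if_true, eq_self_iff_true, cc, Complex.real_smul, hsq]
      push_cast
      field_simp
    · have hC : (Real.sqrt (a i) * Real.sqrt (a j) * (Real.sqrt (a i) * Real.sqrt (a j)) : ℝ)
          = a i * a j := by
        calc (Real.sqrt (a i) * Real.sqrt (a j) * (Real.sqrt (a i) * Real.sqrt (a j)) : ℝ)
            = (Real.sqrt (a i) * Real.sqrt (a i)) * (Real.sqrt (a j) * Real.sqrt (a j)) := by ring
          _ = a i * a j := by rw [hsq i, hsq j]
      simp only [cc, hij, if_false, and_self, eq_self_iff_true, if_true, or_true, hC,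
        Complex.real_smul, if_neg hij]
      push_cast
      field_simp
      ring
  · by_cases hij : i = j <;> by_cases hkl : k = l
    · subst hij; subst hkl
      have hC : (Real.sqrt (a i) * Real.sqrt (a i) * (Real.sqrt (a k) * Real.sqrt (a k)) : ℝ)
          = a i * a k := by rw [hsq i, hsq k]
      simp only [hd, if_false, and_self, eq_self_iff_true, if_true, true_or, hC,
        Complex.real_smul, if_neg hd]
      push_cast
      field_simp
    · have h4 : ¬((i = j ∧ k = l) ∨ (i = k ∧ j = l)) := by
        rintro (⟨-, h⟩ | h)
        · exact hkl h
        · exact hd h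
      simp [hkl, if_neg hd, if_neg h4]
    · have h4 : ¬((i = j ∧ k = l) ∨ (i = k ∧ j = l)) := by
        rintro (⟨h, -⟩ | h)
        · exact hij h
        · exact hd h
      simp [hij, if_neg hd, if_neg h4]
    · have h4 : ¬((i = j ∧ k = l) ∨ (i = k ∧ j = l)) := by
        rintro (⟨h, -⟩ | h)
        · exact hij h
        · exact hd h
      simp [hij, hkl, if_neg hd, if_neg h4]

lemma omega_pow_mul_conj_self (e : ℕ) : ω ^ e * (starRingEnd ℂ) (ω ^ e) = 1 := by
  rw [omega_pow_mul_conj]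
  have : e + 2 * e = 3 * e := by ring
  rw [this, pow_mul, omega_pow_three, one_pow]

lemma tr_re_add {d : Type*} [Fintype d] (W X Y : Matrix d d ℂ) :
    ((W * (X + Y)).trace).re = ((W * X).trace).re + ((W * Y).trace).re := by
  rw [Matrix.mul_add, Matrix.trace_add, Complex.add_re]

lemma tr_re_smul {d : Type*} [Fintype d] (W : Matrix d d ℂ) (r : ℝ) (X : Matrix d d ℂ) :
    ((W * (r • X)).trace).re = r * ((W * X).trace).re := by
  rw [Matrix.mul_smul, Matrix.trace_smul, Complex.real_smul, Complex.re_ofReal_mul]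

lemma tr_re_sum {d : Type*} [Fintype d] {ι : Type*} (s : Finset ι) (W : Matrix d d ℂ)
    (f : ι → Matrix d d ℂ) :
    ((W * (∑ n ∈ s, f n)).trace).re = ∑ n ∈ s, ((W * f n).trace).re := by
  rw [Matrix.mul_sum, Matrix.trace_sum, Complex.re_sum]

lemma outer_real_smul {d : Type*} (r : ℝ) (hr : 0 ≤ r) (v : d → ℂ) :
    r • outer v = outer (fun i => ((Real.sqrt r : ℝ) : ℂ) * v i) := by
  ext i j
  simp only [outer, Matrix.smul_apply, _root_.map_mul, Complex.conj_ofReal, Complex.real_smul]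
  have : ((Real.sqrt r : ℝ) : ℂ) * ((Real.sqrt r : ℝ) : ℂ) = (r : ℂ) := by
    rw [← Complex.ofReal_mul, Real.mul_self_sqrt hr]
  calc (r : ℂ) * (v i * (starRingEnd ℂ) (v j))
      = ((Real.sqrt r : ℝ) : ℂ) * ((Real.sqrt r : ℝ) : ℂ) * (v i * (starRingEnd ℂ) (v j)) := by
        rw [this]
    _ = ((Real.sqrt r : ℝ) : ℂ) * v i * (((Real.sqrt r : ℝ) : ℂ) * (starRingEnd ℂ) (v j)) := by
        ring

lemma psd_real_smul_outer {d : Type*} [Fintype d] (r : ℝ) (hr : 0 ≤ r) (v : d → ℂ) :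
    (r • outer v).PosSemidef := by
  rw [outer_real_smul r hr]
  exact outer_posSemidef _

lemma trace_outer_xv {m : ℕ} (a : Fin m → ℝ) (hpos₀ : ∀ i, 0 ≤ a i) (n : Fin m → Fin 3) :
    (outer (xv a n)).trace = ((∑ i, a i : ℝ) : ℂ) := by
  rw [outer_trace]
  push_cast
  refine Finset.sum_congr rfl fun i _ => ?_
  simp only [xv, _root_.map_mul, Complex.conj_ofReal]
  calc ((Real.sqrt (a i) : ℝ) : ℂ) * ω ^ (n i : ℕ)
        * (((Real.sqrt (a i) : ℝ) : ℂ) * (starRingEnd ℂ) (ω ^ (n i : ℕ)))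
      = ((Real.sqrt (a i) : ℝ) : ℂ) * ((Real.sqrt (a i) : ℝ) : ℂ)
        * (ω ^ (n i : ℕ) * (starRingEnd ℂ) (ω ^ (n i : ℕ))) := by ring
    _ = (a i : ℂ) := by
        rw [omega_pow_mul_conj_self, mul_one, ← Complex.ofReal_mul, Real.mul_self_sqrt (hpos₀ i)]
  
lemma trace_outer_yv {m : ℕ} (a : Fin m → ℝ) (hpos₀ : ∀ i, 0 ≤ a i) (n : Fin m → Fin 3) :
    (outer (yv a n)).trace = ((∑ i, a i : ℝ) : ℂ) := by
  rw [outer_trace]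
  push_cast
  refine Finset.sum_congr rfl fun i _ => ?_
  simp only [yv, _root_.map_mul, Complex.conj_ofReal]
  calc ((Real.sqrt (a i) : ℝ) : ℂ) * ω ^ (2 * (n i : ℕ))
        * (((Real.sqrt (a i) : ℝ) : ℂ) * (starRingEnd ℂ) (ω ^ (2 * (n i : ℕ))))
      = ((Real.sqrt (a i) : ℝ) : ℂ) * ((Real.sqrt (a i) : ℝ) : ℂ)
        * (ω ^ (2 * (n i : ℕ)) * (starRingEnd ℂ) (ω ^ (2 * (n i : ℕ)))) := by ring
    _ = (a i : ℂ) := by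
        rw [omega_pow_mul_conj_self, mul_one, ← Complex.ofReal_mul, Real.mul_self_sqrt (hpos₀ i)]

lemma trace_outer_ev {m : ℕ} (u : Fin m) : (outer (ev u)).trace = 1 := by
  rw [outer_trace]
  have : ∀ r : Fin m, ev u r * (starRingEnd ℂ) (ev u r) = if r = u then 1 else 0 := by
    intro r
    unfold ev
    split_ifs <;> simp
  simp_rw [this]
  rw [Finset.sum_ite_eq' Finset.univ u (fun _ => (1:ℂ))]
  simp

lemma kron_smul_right {a b : ℕ} (r : ℝ) (A : Matrix (Fin a) (Fin a) ℂ)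
    (B : Matrix (Fin b) (Fin b) ℂ) : kron A (r • B) = r • kron A B := by
  ext p q
  simp [kron, Matrix.smul_apply, Complex.real_smul]
  ring

lemma partA {m : ℕ} (hm : 2 ≤ m) (a : Fin m → ℝ) (hpos : ∀ i, 0 ≤ a i) (hord : Antitone a)
    (hnorm : ∑ i, a i ^ 2 = 1) {W : Matrix (BIdx m m) (BIdx m m) ℂ} (hW : IsWitness2 W)
    (ρ : Matrix (BIdx m m) (BIdx m m) ℂ)
    (hρ : ρ = Matrix.of fun p q : BIdx m m => (if p.1 = p.2 then (a p.1 : ℂ) else 0)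
        * (starRingEnd ℂ) (if q.1 = q.2 then (a q.1 : ℂ) else 0)) :
    -(((W * ρ).trace).re) ≤ a ⟨0, by linarith⟩ * a ⟨1, by linarith⟩ := by
  obtain ⟨hherm, htr, hposW⟩ := hW
  set i0 : Fin m := ⟨0, by linarith⟩ with hi0
  set i1 : Fin m := ⟨1, by linarith⟩ with hi1
  set t : ℝ := a i0 * a i1 with hts
  have ht : 0 ≤ t := mul_nonneg (hpos _) (hpos _)
  have key2 : ∀ i j : Fin m, (i : ℕ) < (j : ℕ) → a i * a j ≤ t := by
    intro i j hlt
    have h1 : a i ≤ a i0 := hord (by rw [Fin.le_def]; simp [hi0])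
    have h2 : a j ≤ a i1 := hord (by rw [Fin.le_def]; simp [hi1]; omega)
    have := mul_le_mul h1 h2 (hpos j) (hpos i0)
    linarith
  have hbd : ∀ i j : Fin m, i ≠ j → a i * a j ≤ t := by
    intro i j hne
    rcases lt_or_gt_of_ne (show (i : ℕ) ≠ (j : ℕ) from fun h => hne (Fin.ext h)) with h | h
    · exact key2 i j h
    · rw [mul_comm]
      exact key2 j i h
  have hle1 : ∀ i : Fin m, a i ≤ 1 := by
    intro i
    have h2 : a i ^ 2 ≤ 1 := by
      rw [← hnorm]
      exact Finset.single_le_sum (fun j _ => sq_nonneg (a j)) (Finset.mem_univ i)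
    nlinarith [hpos i]
  have hSsum : (1 : ℝ) ≤ ∑ i, a i := by
    calc (1:ℝ) = ∑ i, a i ^ 2 := hnorm.symm
      _ ≤ ∑ i, a i := Finset.sum_le_sum (fun i _ => by nlinarith [hpos i, hle1 i])
  set S : ℝ := ∑ i, a i with hSs
  have hS0 : 0 < S := lt_of_lt_of_le one_pos hSsum
  have hkey := congrArg (fun M => ((W * M).trace).re) (decomp a hpos t)
  simp only [← hρ] at hkey
  rw [tr_re_add, tr_re_smul, tr_re_add, tr_re_smul, tr_re_sum, tr_re_sum] at hkey
  simp_rw [tr_re_smul] at hkey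
  rw [Matrix.mul_one, htr] at hkey
  simp only [Complex.one_re, mul_one] at hkey
  have hφpos : ∀ n : Fin m → Fin 3, 0 ≤ ((W * outer (φv a n)).trace).re := by
    intro n
    have hdens1 : IsDensity (S⁻¹ • outer (xv a n)) := by
      refine ⟨psd_real_smul_outer _ (by positivity) _, ?_⟩
      rw [Matrix.trace_smul, trace_outer_xv a hpos n, ← hSs, Complex.real_smul,
        ← Complex.ofReal_mul, inv_mul_cancel₀ hS0.ne', Complex.ofReal_one]
    have hdens2 : IsDensity (S⁻¹ • outer (yv a n)) := by
      refine ⟨psd_real_smul_outer _ (by positivity) _, ?_⟩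
      rw [Matrix.trace_smul, trace_outer_yv a hpos n, ← hSs, Complex.real_smul,
        ← Complex.ofReal_mul, inv_mul_cancel₀ hS0.ne', Complex.ofReal_one]
    have hmem : kron (S⁻¹ • outer (xv a n)) (S⁻¹ • outer (yv a n)) ∈ SepSet2 m m :=
      subset_convexHull ℝ _ ⟨_, _, hdens1, hdens2, rfl⟩
    have hfac : outer (φv a n)
        = (S * S) • kron (S⁻¹ • outer (xv a n)) (S⁻¹ • outer (yv a n)) := by
      rw [kron_smul_left, kron_smul_right, kron_outer, smul_smul, smul_smul]
      have hsc : S * S * S⁻¹ * S⁻¹ = 1 := by field_simp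
      rw [hsc, one_smul]
      rfl
    rw [hfac, tr_re_smul]
    exact mul_nonneg (by positivity) (hposW _ hmem)
  have hccpos : ∀ u : BIdx m m,
      0 ≤ cc a t u.1 u.2 * ((W * kron (outer (ev u.1)) (outer (ev u.2))).trace).re := by
    intro u
    refine mul_nonneg ?_ (hposW _ (subset_convexHull ℝ _
      ⟨_, _, ⟨outer_posSemidef _, trace_outer_ev _⟩, ⟨outer_posSemidef _, trace_outer_ev _⟩, rfl⟩))
    unfold cc
    split_ifs with h
    · exact ht
    · linarith [hbd u.1 u.2 h]
  have hA : 0 ≤ ∑ n : Fin m → Fin 3, ((W * outer (φv a n)).trace).re :=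
    Finset.sum_nonneg fun n _ => hφpos n
  have hB : 0 ≤ ∑ u : BIdx m m,
      cc a t u.1 u.2 * ((W * kron (outer (ev u.1)) (outer (ev u.2))).trace).re :=
    Finset.sum_nonneg fun u _ => hccpos u
  have h3 : (0:ℝ) ≤ ((3:ℝ)^m)⁻¹ := by positivity
  nlinarith [hkey, mul_nonneg h3 hA]

def chi {m : ℕ} (i0 i1 : Fin m) : BIdx m m → ℂ := fun p =>
  if p = (i0, i1) then (((Real.sqrt 2)⁻¹ : ℝ) : ℂ)
  else if p = (i1, i0) then ((-(Real.sqrt 2)⁻¹ : ℝ) : ℂ) else 0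

lemma sum_chi_support {m : ℕ} {i0 i1 : Fin m} (hne : i0 ≠ i1) (g : BIdx m m → ℂ) :
    (∑ p, chi i0 i1 p * g p)
      = chi i0 i1 (i0,i1) * g (i0,i1) + chi i0 i1 (i1,i0) * g (i1,i0) := by
  have hpair : ((i0,i1) : BIdx m m) ≠ (i1,i0) :=
    fun h => hne (congrArg Prod.fst h)
  rw [← Finset.sum_subset (Finset.subset_univ ({(i0,i1),(i1,i0)} : Finset (BIdx m m)))]
  · rw [Finset.sum_insert (by simp [hpair]), Finset.sum_singleton]
  · intro x _ hx
    simp only [Finset.mem_insert, Finset.mem_singleton, not_or] at hx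
    unfold chi
    rw [if_neg hx.1, if_neg hx.2, zero_mul]

lemma chi_conj {m : ℕ} (i0 i1 : Fin m) (p : BIdx m m) :
    (starRingEnd ℂ) (chi i0 i1 p) = chi i0 i1 p := by
  unfold chi
  split_ifs <;> simp

lemma chi_val1 {m : ℕ} (i0 i1 : Fin m) :
    chi i0 i1 (i0, i1) = (((Real.sqrt 2)⁻¹ : ℝ) : ℂ) := by
  unfold chi
  rw [if_pos rfl]

lemma chi_val2 {m : ℕ} {i0 i1 : Fin m} (hne : i0 ≠ i1) :
    chi i0 i1 (i1, i0) = ((-(Real.sqrt 2)⁻¹ : ℝ) : ℂ) := by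
  have hpair : ((i1,i0) : BIdx m m) ≠ (i0,i1) :=
    fun h => hne (congrArg Prod.snd h)
  unfold chi
  rw [if_neg hpair, if_pos rfl]

lemma sqrt2_sq : (Real.sqrt 2)⁻¹ * (Real.sqrt 2)⁻¹ = 2⁻¹ := by
  rw [← mul_inv, Real.mul_self_sqrt (by norm_num)]

lemma W0_isWitness {m : ℕ} {i0 i1 : Fin m} (hne : i0 ≠ i1) :
    IsWitness2 (ptA (outer (chi i0 i1))) := by
  refine ⟨ptA_isHermitian (outer_isHermitian _), ?_, ?_⟩
  · rw [ptA_trace, outer_trace]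
    simp_rw [chi_conj]
    rw [sum_chi_support hne (chi i0 i1), chi_val1, chi_val2 hne]
    rw [← Complex.ofReal_mul, ← Complex.ofReal_mul, ← Complex.ofReal_add]
    rw [neg_mul_neg, sqrt2_sq]
    norm_num
  · intro σ hσ
    have hsub : SepSet2 m m ⊆ {σ | 0 ≤ (((ptA (outer (chi i0 i1))) * σ).trace).re} := by
      apply convexHull_min
      · rintro σ' ⟨A, B, hA, hB, rfl⟩
        simp only [Set.mem_setOf_eq]
        rw [trace_ptA_mul, ptA_kron]
        exact trace_outer_mul_nonneg _ (kron_posSemidef hA.1.transpose hB.1)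
      · intro x hx y hy α β hα hβ hαβ
        simp only [Set.mem_setOf_eq] at hx hy ⊢
        rw [tr_re_add, tr_re_smul, tr_re_smul]
        exact add_nonneg (mul_nonneg hα hx) (mul_nonneg hβ hy)
    exact hsub hσ

lemma W0_trace_rho {m : ℕ} (a : Fin m → ℝ) {i0 i1 : Fin m} (hne : i0 ≠ i1) :
    (((ptA (outer (chi i0 i1))) * (Matrix.of fun p q : BIdx m m =>
        (if p.1 = p.2 then (a p.1 : ℂ) else 0)
        * (starRingEnd ℂ) (if q.1 = q.2 then (a q.1 : ℂ) else 0))).trace)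
      = ((-(a i0 * a i1) : ℝ) : ℂ) := by
  set ρ' : Matrix (BIdx m m) (BIdx m m) ℂ := Matrix.of fun p q : BIdx m m =>
    (if p.1 = p.2 then (a p.1 : ℂ) else 0)
      * (starRingEnd ℂ) (if q.1 = q.2 then (a q.1 : ℂ) else 0) with hρ'
  rw [trace_ptA_mul, trace_outer_mul]
  have hdot : star (chi i0 i1) ⬝ᵥ (ptA ρ') *ᵥ (chi i0 i1)
      = ∑ p, chi i0 i1 p * (∑ q, chi i0 i1 q * (ptA ρ') p q) := by
    simp only [dotProduct, mulVec, Pi.star_apply, RCLike.star_def, chi_conj]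
    refine Finset.sum_congr rfl fun p _ => ?_
    rw [Finset.mul_sum, Finset.mul_sum]
    refine Finset.sum_congr rfl fun q _ => ?_
    ring
  rw [hdot, sum_chi_support hne]
  rw [sum_chi_support hne (fun q => (ptA ρ') (i0,i1) q)]
  rw [sum_chi_support hne (fun q => (ptA ρ') (i1,i0) q)]
  have e11 : (ptA ρ') (i0,i1) (i0,i1) = 0 := by
    simp only [ptA, hρ', Matrix.of_apply]
    rw [if_neg hne]
    ring
  have e22 : (ptA ρ') (i1,i0) (i1,i0) = 0 := by
    simp only [ptA, hρ', Matrix.of_apply]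
    rw [if_neg (Ne.symm hne)]
    ring
  have e12 : (ptA ρ') (i0,i1) (i1,i0) = (a i1 : ℂ) * (a i0 : ℂ) := by
    simp only [ptA, hρ', Matrix.of_apply]
    simp [Complex.conj_ofReal]
  have e21 : (ptA ρ') (i1,i0) (i0,i1) = (a i0 : ℂ) * (a i1 : ℂ) := by
    simp only [ptA, hρ', Matrix.of_apply]
    simp [Complex.conj_ofReal]
  rw [e11, e22, e12, e21, chi_val1, chi_val2 hne]
  push_cast
  have h2 : ((Real.sqrt 2 : ℝ) : ℂ)⁻¹ * ((Real.sqrt 2 : ℝ) : ℂ)⁻¹ = 2⁻¹ := by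
    rw [← mul_inv, ← Complex.ofReal_mul, Real.mul_self_sqrt (by norm_num)]
    norm_num
  linear_combination (-2 * (a i0 : ℂ) * (a i1 : ℂ)) * h2

end WEaux

/-- for a pure bipartite state with decreasingly ordered Schmidt
coefficients `a₁ ≥ a₂ ≥ ...`, the witnessed entanglement equals `a₁ a₂`. -/
theorem witnessed_entanglement_pure_state
    {m : ℕ} (hm : 2 ≤ m) (a : Fin m → ℝ)
    (hpos : ∀ i, 0 ≤ a i) (hord : Antitone a) (hnorm : ∑ i, a i ^ 2 = 1)
    (ψ : BIdx m m → ℂ) (hψ : ψ = fun p => if p.1 = p.2 then (a p.1 : ℂ) else 0)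
    (ρ : Matrix (BIdx m m) (BIdx m m) ℂ)
    (hρ : ρ = fun p q => ψ p * (starRingEnd ℂ) (ψ q)) :
    Ew2 ρ = a ⟨0, by omega⟩ * a ⟨1, by omega⟩ := by
  have hρof : ρ = Matrix.of (fun p q : BIdx m m => (if p.1 = p.2 then (a p.1 : ℂ) else 0)
      * (starRingEnd ℂ) (if q.1 = q.2 then (a q.1 : ℂ) else 0)) := by
    rw [hρ, hψ]
    rfl
  have hne : (⟨0, by omega⟩ : Fin m) ≠ (⟨1, by omega⟩ : Fin m) := by
    intro h
    have := congrArg Fin.val h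
    simp at this
  set W0 := ptA (WEaux.outer (WEaux.chi (⟨0, by omega⟩ : Fin m) (⟨1, by omega⟩ : Fin m)))
    with hW0def
  have hval : -(((W0 * ρ).trace).re) = a ⟨0, by omega⟩ * a ⟨1, by omega⟩ := by
    rw [hρof, hW0def, WEaux.W0_trace_rho a hne, Complex.ofReal_re, neg_neg]
  have hub : ∀ x ∈ {x : ℝ | ∃ W, IsWitness2 W ∧ x = -(((W * ρ).trace).re)},
      x ≤ a ⟨0, by omega⟩ * a ⟨1, by omega⟩ := by
    rintro x ⟨W, hW, rfl⟩
    exact WEaux.partA hm a hpos hord hnorm hW ρ hρof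
  have hmem : a ⟨0, by omega⟩ * a ⟨1, by omega⟩
      ∈ {x : ℝ | ∃ W, IsWitness2 W ∧ x = -(((W * ρ).trace).re)} :=
    ⟨W0, WEaux.W0_isWitness hne, hval.symm⟩
  have hsup : sSup {x : ℝ | ∃ W, IsWitness2 W ∧ x = -(((W * ρ).trace).re)}
      = a ⟨0, by omega⟩ * a ⟨1, by omega⟩ :=
    le_antisymm (csSup_le ⟨_, hmem⟩ hub) (le_csSup ⟨_, fun x hx => hub x hx⟩ hmem)
  unfold Ew2
  rw [hsup]
  exact max_eq_right (mul_nonneg (hpos _) (hpos _))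
end
end

section
/- The partial transpose of a separable bipartite state is positive semidefinite (Peres criterion): if σ = Σᵢ pᵢ σᵢ^A ⊗ σᵢ^B with pᵢ ≥ 0, Σpᵢ = 1, and σᵢ^A, σᵢ^B density operators, then σ^{T_A} ≥ 0. -/
open Matrix BigOperators
open scoped ComplexOrder

noncomputable section

lemma ptA_kron {a b : ℕ} (A : Matrix (Fin a) (Fin a) ℂ) (B : Matrix (Fin b) (Fin b) ℂ) :
    ptA (kron A B) = kron Aᵀ B := rfl

lemma ptA_smul {a b : ℕ} {R : Type*} [SMul R ℂ] (c : R) (X : Matrix (BIdx a b) (BIdx a b) ℂ) :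
    ptA (c • X) = c • ptA X := rfl

lemma ptA_sum {a b : ℕ} {ι : Type*} (s : Finset ι) (X : ι → Matrix (BIdx a b) (BIdx a b) ℂ) :
    ptA (∑ i ∈ s, X i) = ∑ i ∈ s, ptA (X i) := by
  ext p q
  simp only [ptA, Matrix.sum_apply]

lemma kron_posSemidef {a b : ℕ} {A : Matrix (Fin a) (Fin a) ℂ} {B : Matrix (Fin b) (Fin b) ℂ}
    (hA : A.PosSemidef) (hB : B.PosSemidef) : (kron A B).PosSemidef :=
  hA.kronecker hB

theorem peres_criterion_general
    {a b : ℕ} {ι : Type*} [Fintype ι] (p : ι → ℝ)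
    (A : ι → Matrix (Fin a) (Fin a) ℂ) (B : ι → Matrix (Fin b) (Fin b) ℂ)
    (hp : ∀ i, 0 ≤ p i)
    (hA : ∀ i, IsDensity (A i)) (hB : ∀ i, IsDensity (B i)) :
    (ptA (∑ i, p i • kron (A i) (B i))).PosSemidef := by
  simp only [ptA_sum, ptA_smul, ptA_kron]
  exact posSemidef_sum _ fun i _ =>
    (kron_posSemidef (hA i).1.transpose (hB i).1).smul (hp i)

/-- Peres criterion: the partial transpose of a separable state is
positive semidefinite. -/
theorem peres_criterion
    {a b : ℕ} {ι : Type*} [Fintype ι] (p : ι → ℝ)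
    (A : ι → Matrix (Fin a) (Fin a) ℂ) (B : ι → Matrix (Fin b) (Fin b) ℂ)
    (hp : ∀ i, 0 ≤ p i) (hsum : ∑ i, p i = 1)
    (hA : ∀ i, IsDensity (A i)) (hB : ∀ i, IsDensity (B i)) :
    (ptA (∑ i, p i • kron (A i) (B i))).PosSemidef :=
  peres_criterion_general p A B hp hA hB
end
end
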